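/- arXiv:1608.01713 — 7 statements merged into one kernel-verified Lean document; each statement's English description precedes it below -/
import Mathlib

section
/- Let {Z_k} be a sequence of non-negative real numbers satisfying Z_{k+1} ≤ p·Z_k + Σ_{j=k-A}^{k} q_j·Z_j for all k ≥ 0, where p ≥ 0, q_j ≥ 0, and A is a non-negative integer (terms with negative index are interpreted as Z_0 or omitted via truncation at 0). If r := p + Σ_{j=k-A}^{k} q_j < 1 (the q_j sum being a constant independent of k), then for any k ≥ A+1, Z_k ≤ r^{(k+1)/(A+1) - 1} · max_{0 ≤ j ≤ A} Z_j. -/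
/-!
Bounding each delayed term by the largest of the last `A + 1` values turns the recursion into
`Z (m + 1) ≤ r · max_{i ≤ A} Z (m - i)`. By strong induction this gives
`Z n ≤ r ^ ⌊n / (A + 1)⌋ · max_{j ≤ A} Z j`: every window of `A + 1` steps costs one factor `r`.
Finally `(k + 1) / (A + 1) - 1 ≤ ⌊k / (A + 1)⌋`, and `x ↦ r ^ x` is antitone for `r ∈ [0, 1]`.
-/

open Finset

theorem add_sum_mul_le_mul {A : ℕ} {p B : ℝ} {q x : ℕ → ℝ} (hp : 0 ≤ p) (hq : ∀ i, 0 ≤ q i)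
    (hx : ∀ i ∈ range (A + 1), x i ≤ B) :
    p * x 0 + ∑ i ∈ range (A + 1), q i * x i ≤ (p + ∑ i ∈ range (A + 1), q i) * B := by
  rw [add_mul, sum_mul]
  exact add_le_add (mul_le_mul_of_nonneg_left (hx 0 (mem_range.mpr A.succ_pos)) hp)
    (sum_le_sum fun i hi ↦ mul_le_mul_of_nonneg_left (hx i hi) (hq i))

theorem le_pow_div_mul_of_le_mul_sup' {A : ℕ} {Z : ℕ → ℝ} {r M : ℝ} (hr0 : 0 ≤ r) (hr1 : r ≤ 1)
    (hM : 0 ≤ M) (hbase : ∀ j ≤ A, Z j ≤ M)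
    (hstep : ∀ m, Z (m + 1) ≤ r * (range (A + 1)).sup' nonempty_range_add_one (fun i ↦ Z (m - i)))
    (n : ℕ) : Z n ≤ r ^ (n / (A + 1)) * M := by
  induction n using Nat.strong_induction_on with
  | _ n ih =>
    rcases le_or_gt n A with hnA | hAn
    · rw [Nat.div_eq_of_lt (Nat.lt_succ_of_le hnA), pow_zero, one_mul]
      exact hbase n hnA
    obtain ⟨m, rfl⟩ : ∃ m, n = m + 1 := ⟨n - 1, by omega⟩
    have hwindow : (range (A + 1)).sup' nonempty_range_add_one (fun i ↦ Z (m - i)) ≤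
        r ^ ((m - A) / (A + 1)) * M := by
      refine sup'_le _ _ fun i hi ↦ (ih (m - i) (by omega)).trans ?_
      have hiA : i ≤ A := Nat.lt_succ_iff.mp (mem_range.mp hi)
      exact mul_le_mul_of_nonneg_right
        (pow_le_pow_of_le_one hr0 hr1 (Nat.div_le_div_right (by omega))) hM
    have hexp : (m + 1) / (A + 1) = (m - A) / (A + 1) + 1 := by
      rw [← Nat.add_div_right _ A.succ_pos]
      congr 1
      omega
    calc Z (m + 1) ≤ r * (r ^ ((m - A) / (A + 1)) * M) :=
          (hstep m).trans (mul_le_mul_of_nonneg_left hwindow hr0)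
      _ = r ^ ((m + 1) / (A + 1)) * M := by rw [hexp, pow_succ]; ring

theorem add_one_div_add_one_sub_one_le_div {A k : ℕ} :
    ((k : ℝ) + 1) / ((A : ℝ) + 1) - 1 ≤ ((k / (A + 1) : ℕ) : ℝ) := by
  have hk : k + 1 ≤ (k / (A + 1) + 1) * (A + 1) := by
    rw [add_one_mul]; exact Nat.lt_div_mul_add A.succ_pos
  rw [sub_le_iff_le_add, div_le_iff₀ (by positivity)]
  exact_mod_cast hk

/-- Lemma 3 (delayed recursive inequality): if a non-negative sequence satisfies
`Z (k+1) ≤ p * Z k + ∑_{i=0}^{A} q i * Z (k - i)` (indices truncated at 0) and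
`r = p + ∑ q i < 1`, then `Z k ≤ r^((k+1)/(A+1) - 1) * max_{0 ≤ j ≤ A} Z j`
for all `k ≥ A + 1`. -/
theorem stmt0 (Z : ℕ → ℝ) (hZ : ∀ k, 0 ≤ Z k)
    (p : ℝ) (hp : 0 ≤ p) (A : ℕ) (q : ℕ → ℝ) (hq : ∀ i, 0 ≤ q i)
    (hrec : ∀ k : ℕ, Z (k + 1) ≤ p * Z k + ∑ i ∈ Finset.range (A + 1), q i * Z (k - i))
    (r : ℝ) (hr : r = p + ∑ i ∈ Finset.range (A + 1), q i) (hr1 : r < 1)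
    (k : ℕ) (hk : A + 1 ≤ k) :
    Z k ≤ r ^ (((k : ℝ) + 1) / ((A : ℝ) + 1) - 1) *
      (Finset.range (A + 1)).sup' Finset.nonempty_range_add_one Z := by
  set M := (range (A + 1)).sup' nonempty_range_add_one Z
  have hr0 : 0 ≤ r := hr ▸ add_nonneg hp (sum_nonneg fun i _ ↦ hq i)
  have hM : 0 ≤ M := (hZ 0).trans (le_sup' Z (mem_range.mpr A.succ_pos))
  have hstep (m : ℕ) :
      Z (m + 1) ≤ r * (range (A + 1)).sup' nonempty_range_add_one (fun i ↦ Z (m - i)) :=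
    hr ▸ (hrec m).trans (add_sum_mul_le_mul (x := fun i ↦ Z (m - i)) hp hq
      fun i hi ↦ le_sup' (fun i ↦ Z (m - i)) hi)
  have hexp_nonneg : 0 ≤ ((k : ℝ) + 1) / ((A : ℝ) + 1) - 1 := by
    rw [sub_nonneg, le_div_iff₀ (by positivity), one_mul]
    exact_mod_cast (by omega : A + 1 ≤ k + 1)
  calc Z k ≤ r ^ (k / (A + 1)) * M :=
        le_pow_div_mul_of_le_mul_sup' hr0 hr1.le hM
          (fun j hj ↦ le_sup' Z (mem_range.mpr (Nat.lt_succ_of_le hj))) hstep k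
    _ ≤ r ^ (((k : ℝ) + 1) / ((A : ℝ) + 1) - 1) * M := by
        rw [← Real.rpow_natCast]
        exact mul_le_mul_of_nonneg_right (Real.rpow_le_rpow_of_exponent_ge' hr0 hr1.le
          hexp_nonneg add_one_div_add_one_sub_one_le_div) hM
end

section
/- Consider the PIAG iteration x_{k+1} = prox_r^η(x_k − η g_k) with g_k = (1/m)Σ_i ∇f_i(x_{τ_{i,k}}) where k−K ≤ τ_{i,k} ≤ k, and write x_{k+1} = x_k + η d_k. If each f_i is L_i-smooth and L = (1/m)Σ_i L_i, then the gradient error satisfies ‖∇f(x_k) − g_k‖ ≤ η L Σ_{j=(k−K)_+}^{k−1} ‖d_j‖. -/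

lemma tele {E : Type*} [NormedAddCommGroup E] (x : ℕ → E) :
    ∀ t k : ℕ, t ≤ k → ‖x k - x t‖ ≤ ∑ j ∈ Finset.Ico t k, ‖x (j+1) - x j‖ := by
  intro t k h
  induction k, h using Nat.le_induction with
  | base => simp
  | succ k hk ih =>
    rw [Finset.sum_Ico_succ_top (by omega)]
    calc ‖x (k+1) - x t‖ ≤ ‖x k - x t‖ + ‖x (k+1) - x k‖ := by
          have := norm_add_le (x k - x t) (x (k+1) - x k); simpa [sub_add_sub_cancel'] using this
      _ ≤ _ := by linarith

/-- Gradient error bound for PIAG: the aggregated gradient `g k` (with delays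
at most `K`) satisfies `‖∇f(x_k) - g_k‖ ≤ ηL ∑_{j=(k-K)₊}^{k-1} ‖d_j‖`. -/
theorem stmt5
    {n m K : ℕ} (hm : 0 < m)
    (f : Fin m → EuclideanSpace ℝ (Fin n) → ℝ) (Li : Fin m → ℝ)
    (hLi : ∀ i, 0 ≤ Li i)
    (hdiff : ∀ i, Differentiable ℝ (f i))
    (hLip : ∀ i x y, ‖gradient (f i) x - gradient (f i) y‖ ≤ Li i * ‖x - y‖)
    (fs : EuclideanSpace ℝ (Fin n) → ℝ)
    (hfs : ∀ z, fs z = (m : ℝ)⁻¹ * ∑ i, f i z)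
    (L : ℝ) (hL : L = (m : ℝ)⁻¹ * ∑ i, Li i) (hLpos : 0 < L)
    (μ : ℝ) (hμ : 0 < μ)
    (hsc : ConvexOn ℝ Set.univ (fun z => fs z - μ / 2 * ‖z‖ ^ 2))
    (r : EuclideanSpace ℝ (Fin n) → ℝ)
    (hr : ConvexOn ℝ Set.univ r) (hrlsc : LowerSemicontinuous r)
    (η : ℝ) (hη : 0 < η)
    (x : ℕ → EuclideanSpace ℝ (Fin n))
    (τ : Fin m → ℕ → ℕ) (hτ : ∀ i k, k - K ≤ τ i k ∧ τ i k ≤ k)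
    (g : ℕ → EuclideanSpace ℝ (Fin n))
    (hg : ∀ k, g k = (m : ℝ)⁻¹ • ∑ i, gradient (f i) (x (τ i k)))
    (hiter : ∀ (k : ℕ) (z : EuclideanSpace ℝ (Fin n)),
      1 / 2 * ‖x (k + 1) - (x k - η • g k)‖ ^ 2 + η * r (x (k + 1))
        ≤ 1 / 2 * ‖z - (x k - η • g k)‖ ^ 2 + η * r z)
    (d : ℕ → EuclideanSpace ℝ (Fin n)) (hd : ∀ k, d k = η⁻¹ • (x (k + 1) - x k))
    (xs : EuclideanSpace ℝ (Fin n)) (hxs : ∀ z, fs xs + r xs ≤ fs z + r z)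
    (Fk : ℕ → ℝ) (hFk : ∀ k, Fk k = fs (x k) + r (x k) - (fs xs + r xs))
    (k : ℕ) :
    ‖gradient fs (x k) - g k‖ ≤ η * L * ∑ j ∈ Finset.Ico (k - K) k, ‖d j‖ := by

  -- gradient of fs
  have hfs' : fs = fun z => (m : ℝ)⁻¹ * ∑ i, f i z := funext hfs
  have hgrad : ∀ y, gradient fs y = (m : ℝ)⁻¹ • ∑ i, gradient (f i) y := by
    intro y
    have hdsum : DifferentiableAt ℝ (fun z => ∑ i, f i z) y :=
      DifferentiableAt.fun_sum fun i _ => (hdiff i).differentiableAt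
    have hfd : fderiv ℝ fs y = (m : ℝ)⁻¹ • ∑ i, fderiv ℝ (f i) y := by
      rw [hfs', fderiv_const_mul hdsum,
        fderiv_fun_sum (fun i _ => (hdiff i).differentiableAt)]
    unfold gradient
    rw [hfd, map_smul, map_sum]
  set S : ℝ := ∑ j ∈ Finset.Ico (k - K) k, ‖d j‖ with hS
  have hSnn : 0 ≤ S := Finset.sum_nonneg fun j _ => norm_nonneg _
  have hstep : ∀ j, ‖x (j+1) - x j‖ = η * ‖d j‖ := by
    intro j
    have : x (j+1) - x j = η • d j := by
      rw [hd j, smul_smul, mul_inv_cancel₀ hη.ne', one_smul]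
    rw [this, norm_smul, Real.norm_of_nonneg hη.le]
  have hxbound : ∀ i : Fin m, ‖x k - x (τ i k)‖ ≤ η * S := by
    intro i
    calc ‖x k - x (τ i k)‖ ≤ ∑ j ∈ Finset.Ico (τ i k) k, ‖x (j+1) - x j‖ :=
          tele x _ _ (hτ i k).2
      _ ≤ ∑ j ∈ Finset.Ico (k - K) k, ‖x (j+1) - x j‖ := by
          apply Finset.sum_le_sum_of_subset_of_nonneg
          · apply Finset.Ico_subset_Ico (hτ i k).1 le_rfl
          · intro j _ _; exact norm_nonneg _
      _ = η * S := by
          rw [hS, Finset.mul_sum]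
          exact Finset.sum_congr rfl fun j _ => hstep j
  have key : gradient fs (x k) - g k
      = (m : ℝ)⁻¹ • ∑ i, (gradient (f i) (x k) - gradient (f i) (x (τ i k))) := by
    rw [hgrad, hg, ← smul_sub, Finset.sum_sub_distrib]
  calc ‖gradient fs (x k) - g k‖
      = ‖(m : ℝ)⁻¹ • ∑ i, (gradient (f i) (x k) - gradient (f i) (x (τ i k)))‖ := by
        rw [key]
    _ ≤ (m : ℝ)⁻¹ * ∑ i, ‖gradient (f i) (x k) - gradient (f i) (x (τ i k))‖ := by
        rw [norm_smul, Real.norm_of_nonneg (by positivity)]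
        gcongr
        exact norm_sum_le _ _
    _ ≤ (m : ℝ)⁻¹ * ∑ i, Li i * (η * S) := by
        gcongr with i
        calc ‖gradient (f i) (x k) - gradient (f i) (x (τ i k))‖
            ≤ Li i * ‖x k - x (τ i k)‖ := hLip i _ _
          _ ≤ Li i * (η * S) := by
              have := hxbound i
              exact mul_le_mul_of_nonneg_left this (hLi i)
    _ = η * L * S := by
        rw [← Finset.sum_mul, hL]; ring
end

section
/- Under Assumptions 1 and 2 (each f_i is L_i-smooth, L = (1/m)Σ L_i, f = (1/m)Σ f_i is μ-strongly convex, r is proper, closed, convex), the PIAG iterates satisfy F_{k+1} ≤ F_k − (η/2)‖d_k‖² + (η² L/2) Σ_{j=(k−K)_+}^{k−1} ‖d_j‖² for any step size 0 < η ≤ 1/(L(K+1)), where F_k = F(x_k) − F(x*) and d_k = (x_{k+1}−x_k)/η. -/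
/-!
The smooth part is controlled by the descent lemma for each `f i`, taken with the delayed gradient
`∇f i (x (τ i k))` in place of `∇f i (x k)`; the error is `L i ‖x k - x (τ i k)‖ ‖Δ‖` with
`Δ = x (k + 1) - x k`, and the delay is at most the path length `∑_{j ∈ [k-K, k)} ‖x (j+1) - x j‖`.
The prox step, being the minimizer of a `1`-strongly convex objective, gives
`r (x (k+1)) ≤ r (x k) - ⟪g k, Δ⟫ - ‖Δ‖² / η`, so the inner products cancel when the two are
added. Splitting the delay terms by `ab ≤ a²/2 + b²/2` leaves, besides the sum over the window,
`(L (K+1)/2 - 1/η) ‖Δ‖²`, which is at most `-‖Δ‖² / (2η)` under the step-size condition.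
-/

open RealInnerProductSpace Finset

section InnerProductSpace

variable {E : Type*} [NormedAddCommGroup E] [InnerProductSpace ℝ E]

theorem Differentiable.le_add_inner_gradient_add_sq [CompleteSpace E] {φ : E → ℝ} {C : ℝ}
    (hφ : Differentiable ℝ φ) (hlip : ∀ u v, ‖gradient φ u - gradient φ v‖ ≤ C * ‖u - v‖)
    (x y : E) : φ y ≤ φ x + ⟪gradient φ x, y - x⟫ + C / 2 * ‖y - x‖ ^ 2 := by
  set v := y - x
  -- the gap to the quadratic model along the segment is antitone, by the Lipschitz bound
  set ψ : ℝ → ℝ := fun t => φ (x + t • v) - t * ⟪gradient φ x, v⟫ - C / 2 * t ^ 2 * ‖v‖ ^ 2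
  have hψ : ∀ t, HasDerivAt ψ (⟪gradient φ (x + t • v) - gradient φ x, v⟫ - C * t * ‖v‖ ^ 2) t := by
    intro t
    have hline : HasDerivAt (fun s : ℝ => x + s • v) v t := by
      simpa using ((hasDerivAt_id t).smul_const v).const_add x
    have hφt := (hφ (x + t • v)).hasGradientAt.hasFDerivAt.comp_hasDerivAt t hline
    have := ((hφt.sub ((hasDerivAt_id t).mul_const ⟪gradient φ x, v⟫)).sub
      (((hasDerivAt_pow 2 t).const_mul (C / 2)).mul_const (‖v‖ ^ 2)))
    refine this.congr_deriv ?_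
    simp only [InnerProductSpace.toDual_apply_apply, inner_sub_left]
    ring
  have hψ' : ∀ t ∈ interior (Set.Icc (0 : ℝ) 1),
      ⟪gradient φ (x + t • v) - gradient φ x, v⟫ - C * t * ‖v‖ ^ 2 ≤ 0 := by
    intro t ht
    rw [interior_Icc] at ht
    have hgrad : ‖gradient φ (x + t • v) - gradient φ x‖ ≤ C * (t * ‖v‖) := by
      simpa [norm_smul, abs_of_pos ht.1] using hlip (x + t • v) x
    nlinarith [real_inner_le_norm (gradient φ (x + t • v) - gradient φ x) v, norm_nonneg v]
  have hanti : AntitoneOn ψ (Set.Icc 0 1) :=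
    antitoneOn_of_hasDerivWithinAt_nonpos (convex_Icc 0 1)
      (fun t _ => (hψ t).continuousAt.continuousWithinAt) (fun t _ => (hψ t).hasDerivWithinAt) hψ'
  have := hanti (Set.left_mem_Icc.2 zero_le_one) (Set.right_mem_Icc.2 zero_le_one) zero_le_one
  simp only [ψ, v, one_smul, zero_smul, add_zero, add_sub_cancel] at this
  linarith

theorem Differentiable.le_add_inner_gradient_of_delayed [CompleteSpace E] {φ : E → ℝ} {C : ℝ}
    (hφ : Differentiable ℝ φ) (hlip : ∀ u v, ‖gradient φ u - gradient φ v‖ ≤ C * ‖u - v‖)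
    (x y w : E) :
    φ y ≤ φ x + ⟪gradient φ w, y - x⟫ + C * (‖x - w‖ * ‖y - x‖ + ‖y - x‖ ^ 2 / 2) := by
  have hdelay : ⟪gradient φ x - gradient φ w, y - x⟫ ≤ C * ‖x - w‖ * ‖y - x‖ :=
    (real_inner_le_norm _ _).trans (mul_le_mul_of_nonneg_right (hlip x w) (norm_nonneg _))
  rw [inner_sub_left] at hdelay
  linarith [hφ.le_add_inner_gradient_add_sq hlip x y]

theorem mul_sum_le_add_inner_sum_delayed_gradient [CompleteSpace E] {ι : Type*} [Fintype ι]
    {f : ι → E → ℝ} {C : ι → ℝ} (hC : ∀ i, 0 ≤ C i) (hf : ∀ i, Differentiable ℝ (f i))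
    (hlip : ∀ i u v, ‖gradient (f i) u - gradient (f i) v‖ ≤ C i * ‖u - v‖)
    {c ρ : ℝ} (hc : 0 ≤ c) (x y : E) (w : ι → E) (hw : ∀ i, ‖x - w i‖ ≤ ρ) :
    c * ∑ i, f i y ≤ c * ∑ i, f i x + ⟪c • ∑ i, gradient (f i) (w i), y - x⟫
      + c * ∑ i, C i * (ρ * ‖y - x‖ + ‖y - x‖ ^ 2 / 2) := by
  have hsum : ∑ i, f i y ≤ ∑ i, (f i x + ⟪gradient (f i) (w i), y - x⟫
      + C i * (ρ * ‖y - x‖ + ‖y - x‖ ^ 2 / 2)) := by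
    refine sum_le_sum fun i _ =>
      ((hf i).le_add_inner_gradient_of_delayed (hlip i) x y (w i)).trans ?_
    gcongr
    · exact hC i
    · exact hw i
  rw [sum_add_distrib, sum_add_distrib, ← sum_inner] at hsum
  rw [inner_smul_left, RCLike.conj_to_real]
  nlinarith [mul_le_mul_of_nonneg_left hsum hc]

theorem StrongConvexOn.add_sq_le_of_isMinOn {s : Set E} {m : ℝ} {φ : E → ℝ}
    (hφ : StrongConvexOn s m φ) {a : E} (ha : a ∈ s) (hmin : IsMinOn φ s a) {z : E} (hz : z ∈ s) :
    φ a + m / 2 * ‖z - a‖ ^ 2 ≤ φ z := by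
  -- compare `a` with the points `(1 - t) • a + t • z` and let `t → 0⁺`
  have hcoeff : ∀ t ∈ Set.Ioo (0 : ℝ) 1, φ a + (1 - t) * (m / 2 * ‖z - a‖ ^ 2) ≤ φ z := by
    rintro t ⟨ht0, ht1⟩
    have hconv := hφ.2 ha hz (sub_nonneg.2 ht1.le) ht0.le (by ring)
    have hle : φ a ≤ φ ((1 - t) • a + t • z) :=
      hmin (hφ.1 ha hz (sub_nonneg.2 ht1.le) ht0.le (by ring))
    simp only [smul_eq_mul, norm_sub_rev a z] at hconv
    have : t * (φ a + (1 - t) * (m / 2 * ‖z - a‖ ^ 2)) ≤ t * φ z := by nlinarith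
    exact le_of_mul_le_mul_left this ht0
  have hlim : Filter.Tendsto (fun t : ℝ => φ a + (1 - t) * (m / 2 * ‖z - a‖ ^ 2))
      (nhdsWithin 0 (Set.Ioi 0)) (nhds (φ a + m / 2 * ‖z - a‖ ^ 2)) := by
    refine tendsto_nhdsWithin_of_tendsto_nhds ((Continuous.tendsto' ?_ 0 _ ?_))
    · fun_prop
    · simp
  exact le_of_tendsto hlim (Filter.eventually_of_mem (Ioo_mem_nhdsGT zero_lt_one) hcoeff)

theorem ConvexOn.strongConvexOn_half_sq_norm_sub_add {r : E → ℝ} (hr : ConvexOn ℝ Set.univ r)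
    {η : ℝ} (hη : 0 ≤ η) (y : E) :
    StrongConvexOn Set.univ 1 (fun z => 1 / 2 * ‖z - y‖ ^ 2 + η * r z) := by
  rw [strongConvexOn_iff_convex]
  have hlin : ConvexOn ℝ Set.univ fun z => ⟪-y, z⟫ + 1 / 2 * ‖y‖ ^ 2 :=
    ((innerₗ E (-y)).convexOn convex_univ).add_const _
  refine ((hr.smul hη).add hlin).congr fun z _ => ?_
  simp only [Pi.add_apply, smul_eq_mul, norm_sub_sq_real, inner_neg_left,
    real_inner_comm y z]
  ring

theorem ConvexOn.le_sub_inner_of_prox {r : E → ℝ} (hr : ConvexOn ℝ Set.univ r) {η : ℝ}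
    (hη : 0 < η) (x g xp : E)
    (hxp : ∀ z, 1 / 2 * ‖xp - (x - η • g)‖ ^ 2 + η * r xp
      ≤ 1 / 2 * ‖z - (x - η • g)‖ ^ 2 + η * r z) :
    r xp ≤ r x - ⟪g, xp - x⟫ - η⁻¹ * ‖xp - x‖ ^ 2 := by
  have h := (hr.strongConvexOn_half_sq_norm_sub_add hη.le (x - η • g)).add_sq_le_of_isMinOn
    (Set.mem_univ xp) (fun z _ => hxp z) (Set.mem_univ x)
  have hfar : xp - (x - η • g) = (xp - x) + η • g := by abel
  simp only [hfar, sub_sub_cancel, norm_add_sq_real, inner_smul_right, norm_smul,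
    Real.norm_of_nonneg hη.le, norm_sub_rev x xp] at h
  have : η * r xp ≤ η * (r x - ⟪g, xp - x⟫ - η⁻¹ * ‖xp - x‖ ^ 2) := by
    rw [mul_sub, mul_sub, ← mul_assoc, mul_inv_cancel₀ hη.ne', real_inner_comm]
    nlinarith
  exact le_of_mul_le_mul_left this hη

end InnerProductSpace

theorem norm_sub_le_sum_Ico_norm_sub {G : Type*} [SeminormedAddCommGroup G] (x : ℕ → G)
    {a t k : ℕ} (hat : a ≤ t) (htk : t ≤ k) :
    ‖x k - x t‖ ≤ ∑ j ∈ Ico a k, ‖x (j + 1) - x j‖ := by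
  have h := dist_le_Ico_sum_dist x htk
  simp only [dist_eq_norm'] at h
  exact h.trans <| sum_le_sum_of_subset_of_nonneg (Ico_subset_Ico hat le_rfl)
    fun _ _ _ => norm_nonneg _

theorem mul_sum_le_mul_add_sum_sq_of_card_le {ι : Type*} {s : Finset ι} {N : ℕ} (hs : #s ≤ N)
    (a : ℝ) (b : ι → ℝ) :
    a * ∑ j ∈ s, b j ≤ N * (a ^ 2 / 2) + ∑ j ∈ s, b j ^ 2 / 2 := by
  have hamgm : a * ∑ j ∈ s, b j ≤ #s * (a ^ 2 / 2) + ∑ j ∈ s, b j ^ 2 / 2 := by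
    rw [mul_sum, ← nsmul_eq_mul, ← sum_const, ← sum_add_distrib]
    exact sum_le_sum fun j _ => by linarith [two_mul_le_add_sq a (b j)]
  exact hamgm.trans (by gcongr)

theorem stmt6_general
    {n m K : ℕ}
    (f : Fin m → EuclideanSpace ℝ (Fin n) → ℝ) (Li : Fin m → ℝ)
    (hLi : ∀ i, 0 ≤ Li i)
    (hdiff : ∀ i, Differentiable ℝ (f i))
    (hLip : ∀ i x y, ‖gradient (f i) x - gradient (f i) y‖ ≤ Li i * ‖x - y‖)
    (fs : EuclideanSpace ℝ (Fin n) → ℝ)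
    (hfs : ∀ z, fs z = (m : ℝ)⁻¹ * ∑ i, f i z)
    (L : ℝ) (hL : L = (m : ℝ)⁻¹ * ∑ i, Li i)
    (r : EuclideanSpace ℝ (Fin n) → ℝ)
    (hr : ConvexOn ℝ Set.univ r)
    (η : ℝ) (hη : 0 < η)
    (x : ℕ → EuclideanSpace ℝ (Fin n))
    (τ : Fin m → ℕ → ℕ) (hτ : ∀ i k, k - K ≤ τ i k ∧ τ i k ≤ k)
    (g : ℕ → EuclideanSpace ℝ (Fin n))
    (hg : ∀ k, g k = (m : ℝ)⁻¹ • ∑ i, gradient (f i) (x (τ i k)))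
    (hiter : ∀ (k : ℕ) (z : EuclideanSpace ℝ (Fin n)),
      1 / 2 * ‖x (k + 1) - (x k - η • g k)‖ ^ 2 + η * r (x (k + 1))
        ≤ 1 / 2 * ‖z - (x k - η • g k)‖ ^ 2 + η * r z)
    (d : ℕ → EuclideanSpace ℝ (Fin n)) (hd : ∀ k, d k = η⁻¹ • (x (k + 1) - x k))
    (xs : EuclideanSpace ℝ (Fin n))
    (Fk : ℕ → ℝ) (hFk : ∀ k, Fk k = fs (x k) + r (x k) - (fs xs + r xs))
    (hηle : η ≤ 1 / (L * (K + 1)))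
    (k : ℕ) :
    Fk (k + 1) ≤ Fk k - η / 2 * ‖d k‖ ^ 2
      + η ^ 2 * L / 2 * ∑ j ∈ Finset.Ico (k - K) k, ‖d j‖ ^ 2 := by
  have hL0 : 0 ≤ L := hL ▸ mul_nonneg (by positivity) (sum_nonneg fun i _ => hLi i)
  have hjump : ∀ j, ‖x (j + 1) - x j‖ = η * ‖d j‖ := fun j => by
    rw [hd, norm_smul, norm_inv, Real.norm_of_nonneg hη.le, mul_inv_cancel_left₀ hη.ne']
  have hsmooth := mul_sum_le_add_inner_sum_delayed_gradient hLi hdiff hLip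
    (by positivity : (0 : ℝ) ≤ (m : ℝ)⁻¹) (x k) (x (k + 1)) (fun i => x (τ i k))
    fun i => norm_sub_le_sum_Ico_norm_sub x (hτ i k).1 (hτ i k).2
  rw [← hfs, ← hfs, ← hg, ← sum_mul, ← mul_assoc, ← hL] at hsmooth
  have hprox := hr.le_sub_inner_of_prox hη (x k) (g k) (x (k + 1)) (hiter k)
  have hamgm := mul_sum_le_mul_add_sum_sq_of_card_le
    (by simp only [Nat.card_Ico]; omega : #(Ico (k - K) k) ≤ K)
    ‖x (k + 1) - x k‖ fun j => ‖x (j + 1) - x j‖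
  have hsq : ∑ j ∈ Ico (k - K) k, ‖x (j + 1) - x j‖ ^ 2 / 2
      = η ^ 2 / 2 * ∑ j ∈ Ico (k - K) k, ‖d j‖ ^ 2 := by
    rw [mul_sum]; exact sum_congr rfl fun j _ => by rw [hjump]; ring
  rw [hsq] at hamgm
  have hdecrease : η⁻¹ * ‖x (k + 1) - x k‖ ^ 2 = η * ‖d k‖ ^ 2 := by
    rw [hjump]; field_simp
  have hstep : L * (K + 1) ≤ η⁻¹ := by
    rcases hL0.eq_or_lt with hL0 | hLpos
    · rw [← hL0, zero_mul]; positivity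
    · rw [← one_div]; exact (le_one_div hη (by positivity)).1 hηle
  rw [hFk, hFk]
  linarith [mul_le_mul_of_nonneg_left hamgm hL0,
    mul_le_mul_of_nonneg_right hstep (sq_nonneg ‖x (k + 1) - x k‖)]

/-- Lemma 1 (descent of suboptimality for PIAG): for `0 < η ≤ 1/(L(K+1))`,
`F_{k+1} ≤ F_k - (η/2)‖d_k‖² + (η²L/2) ∑_{j=(k-K)₊}^{k-1} ‖d_j‖²`. -/
theorem stmt6
    {n m K : ℕ} (hm : 0 < m)
    (f : Fin m → EuclideanSpace ℝ (Fin n) → ℝ) (Li : Fin m → ℝ)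
    (hLi : ∀ i, 0 ≤ Li i)
    (hdiff : ∀ i, Differentiable ℝ (f i))
    (hLip : ∀ i x y, ‖gradient (f i) x - gradient (f i) y‖ ≤ Li i * ‖x - y‖)
    (fs : EuclideanSpace ℝ (Fin n) → ℝ)
    (hfs : ∀ z, fs z = (m : ℝ)⁻¹ * ∑ i, f i z)
    (L : ℝ) (hL : L = (m : ℝ)⁻¹ * ∑ i, Li i) (hLpos : 0 < L)
    (μ : ℝ) (hμ : 0 < μ)
    (hsc : ConvexOn ℝ Set.univ (fun z => fs z - μ / 2 * ‖z‖ ^ 2))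
    (r : EuclideanSpace ℝ (Fin n) → ℝ)
    (hr : ConvexOn ℝ Set.univ r) (hrlsc : LowerSemicontinuous r)
    (η : ℝ) (hη : 0 < η)
    (x : ℕ → EuclideanSpace ℝ (Fin n))
    (τ : Fin m → ℕ → ℕ) (hτ : ∀ i k, k - K ≤ τ i k ∧ τ i k ≤ k)
    (g : ℕ → EuclideanSpace ℝ (Fin n))
    (hg : ∀ k, g k = (m : ℝ)⁻¹ • ∑ i, gradient (f i) (x (τ i k)))
    (hiter : ∀ (k : ℕ) (z : EuclideanSpace ℝ (Fin n)),
      1 / 2 * ‖x (k + 1) - (x k - η • g k)‖ ^ 2 + η * r (x (k + 1))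
        ≤ 1 / 2 * ‖z - (x k - η • g k)‖ ^ 2 + η * r z)
    (d : ℕ → EuclideanSpace ℝ (Fin n)) (hd : ∀ k, d k = η⁻¹ • (x (k + 1) - x k))
    (xs : EuclideanSpace ℝ (Fin n)) (hxs : ∀ z, fs xs + r xs ≤ fs z + r z)
    (Fk : ℕ → ℝ) (hFk : ∀ k, Fk k = fs (x k) + r (x k) - (fs xs + r xs))
    (hηle : η ≤ 1 / (L * (K + 1)))
    (k : ℕ) :
    Fk (k + 1) ≤ Fk k - η / 2 * ‖d k‖ ^ 2
      + η ^ 2 * L / 2 * ∑ j ∈ Finset.Ico (k - K) k, ‖d j‖ ^ 2 :=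
  stmt6_general f Li hLi hdiff hLip fs hfs L hL r hr η hη x τ hτ g hg hiter d hd xs Fk hFk hηle k
end

section
/- Under Assumptions 1 and 2, the distance of PIAG iterates from the optimum satisfies ‖x_k − x*‖ ≤ (2/μ)‖d_k‖ + 2ηQ Σ_{j=(k−K)_+}^{k−1} ‖d_j‖ for any k ≥ 0 and 0 < η ≤ 1/L, where Q = L/μ is the condition number. -/
/-!
The optimum `x*` is a fixed point of the exact proximal-gradient map
`z ↦ prox_r^η (z - η ∇f z)`. For `η ≤ 1/L` this map contracts by the factor `1 - ημ/2`: the prox is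
nonexpansive, and the gradient step contracts by strong monotonicity and co-coercivity of `∇f`.
PIAG applies the map with `∇f(x_k)` replaced by `g_k`, and `‖∇f(x_k) - g_k‖ ≤ L η ∑ ‖d_j‖` over the
last `K` steps because every delayed iterate is that close to `x_k`. Hence
`‖x_k - x*‖ ≤ η‖d_k‖ + ‖x_{k+1} - x*‖ ≤ η‖d_k‖ + (1 - ημ/2)‖x_k - x*‖ + η ‖∇f(x_k) - g_k‖`,
and solving for `‖x_k - x*‖` gives the bound.
-/

open Set Filter Topology
open scoped Gradient RealInnerProductSpace

section Normed

variable {E : Type*} [NormedAddCommGroup E]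

lemma norm_sub_le_sum_Ico_norm_sub_s7 (x : ℕ → E) {a b K : ℕ} (hab : a ≤ b) (hba : b - K ≤ a) :
    ‖x b - x a‖ ≤ ∑ j ∈ Finset.Ico (b - K) b, ‖x (j + 1) - x j‖ := by
  rw [← dist_eq_norm']
  refine (dist_le_Ico_sum_dist x hab).trans ?_
  simp_rw [dist_eq_norm']
  exact Finset.sum_le_sum_of_subset_of_nonneg (Finset.Ico_subset_Ico hba le_rfl)
    fun _ _ _ => norm_nonneg _

variable [NormedSpace ℝ E] {f : E → ℝ} {m : ℝ}

lemma StrongConvexOn.add_sq_norm_sub_le_of_isMinOn {p : E} (hf : StrongConvexOn univ m f)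
    (hp : IsMinOn f univ p) (z : E) : f p + m / 2 * ‖z - p‖ ^ 2 ≤ f z := by
  have hlim : Tendsto (fun t : ℝ => f p + (1 - t) * (m / 2 * ‖z - p‖ ^ 2)) (𝓝[>] 0)
      (𝓝 (f p + m / 2 * ‖z - p‖ ^ 2)) :=
    ((Continuous.tendsto' (by fun_prop) 0 _ (by simp))).mono_left nhdsWithin_le_nhds
  refine le_of_tendsto hlim ?_
  filter_upwards [Ioo_mem_nhdsGT one_pos] with t ⟨ht0, ht1⟩
  have hmin := isMinOn_univ_iff.1 hp ((1 - t) • p + t • z)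
  have hconv := hf.2 (mem_univ p) (mem_univ z) (sub_nonneg.2 ht1.le) ht0.le (sub_add_cancel 1 t)
  rw [smul_eq_mul, smul_eq_mul, norm_sub_rev] at hconv
  refine le_of_mul_le_mul_left ?_ ht0
  linarith

lemma norm_smul_sum_sub_smul_sum_le {ι : Type*} [Fintype ι] {c : ℝ} (hc : 0 ≤ c) {a b : ι → E}
    {B : ι → ℝ} (h : ∀ i, ‖a i - b i‖ ≤ B i) : ‖c • ∑ i, a i - c • ∑ i, b i‖ ≤ c * ∑ i, B i := by
  rw [← smul_sub, ← Finset.sum_sub_distrib, norm_smul, Real.norm_of_nonneg hc]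
  gcongr
  exact (norm_sum_le _ _).trans (Finset.sum_le_sum fun i _ => h i)

end Normed

variable {V : Type*} [NormedAddCommGroup V] [InnerProductSpace ℝ V]

lemma inner_sub_sub_eq (a b x y : V) : ⟪a - b, x - y⟫ = -⟪a, y - x⟫ - ⟪b, x - y⟫ := by
  rw [← neg_sub x y, inner_neg_right, inner_sub_left]; ring

section Prox

/-- `p = prox_r^η v` means that `p` minimises `proxObjective r η v`. -/
noncomputable def proxObjective (r : V → ℝ) (η : ℝ) (v z : V) : ℝ := 1 / 2 * ‖z - v‖ ^ 2 + η * r z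

variable {r : V → ℝ} {η : ℝ}

lemma strongConvexOn_proxObjective (hr : ConvexOn ℝ univ r) (hη : 0 ≤ η) (v : V) :
    StrongConvexOn univ 1 (proxObjective r η v) := by
  rw [strongConvexOn_iff_convex]
  have hlin : ConvexOn ℝ univ fun z : V => -⟪v, z⟫ :=
    (-(innerₗ V v)).convexOn convex_univ
  refine (((hr.smul hη).add hlin).add_const (1 / 2 * ‖v‖ ^ 2)).congr fun z _ => ?_
  simp only [proxObjective, Pi.add_apply, norm_sub_sq_real, smul_eq_mul, real_inner_comm v z]
  ring

lemma norm_sub_le_norm_sub_of_isMinOn_proxObjective (hr : ConvexOn ℝ univ r) (hη : 0 ≤ η)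
    {u v p q : V} (hp : IsMinOn (proxObjective r η u) univ p)
    (hq : IsMinOn (proxObjective r η v) univ q) : ‖p - q‖ ≤ ‖u - v‖ := by
  have hpq := (strongConvexOn_proxObjective hr hη u).add_sq_norm_sub_le_of_isMinOn hp q
  have hqp := (strongConvexOn_proxObjective hr hη v).add_sq_norm_sub_le_of_isMinOn hq p
  have hfirm : ‖p - q‖ ^ 2 ≤ ⟪p - q, u - v⟫ := by
    simp only [proxObjective, norm_sub_sq_real, inner_sub_left, inner_sub_right,
      real_inner_comm] at hpq hqp ⊢
    linarith
  have hcs := real_inner_le_norm (p - q) (u - v)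
  nlinarith [norm_nonneg (p - q), norm_nonneg (u - v)]

end Prox

section Smooth

variable [CompleteSpace V] {f : V → ℝ}

lemma hasDerivAt_apply_add_smul {x v : V} {t : ℝ} (hf : DifferentiableAt ℝ f (x + t • v)) :
    HasDerivAt (fun s : ℝ => f (x + s • v)) ⟪∇ f (x + t • v), v⟫ t := by
  have hline : HasDerivAt (fun s : ℝ => x + s • v) v t := by
    simpa using ((hasDerivAt_id t).smul_const v).const_add x
  have h := hf.hasFDerivAt.comp_hasDerivAt t hline
  rwa [hf.hasGradientAt.fderiv_apply] at h

lemma StrongConvexOn.add_inner_gradient_add_sq_le {m : ℝ} {x : V}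
    (hf : StrongConvexOn univ m f) (hd : DifferentiableAt ℝ f x) (y : V) :
    f x + ⟪∇ f x, y - x⟫ + m / 2 * ‖y - x‖ ^ 2 ≤ f y := by
  set φ : ℝ → ℝ := fun t => f (x + t • (y - x))
  have hderiv : HasDerivAt φ ⟪∇ f x, y - x⟫ 0 := by
    simpa using hasDerivAt_apply_add_smul (v := y - x) (t := 0) (by simpa using hd)
  have hslope : Tendsto (slope φ 0) (𝓝[>] 0) (𝓝 ⟪∇ f x, y - x⟫) :=
    (hasDerivAt_iff_tendsto_slope.1 hderiv).mono_left
      (nhdsWithin_mono _ fun t ht => ne_of_gt ht)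
  have hlim : Tendsto (fun t : ℝ => f y - f x - (1 - t) * (m / 2 * ‖y - x‖ ^ 2)) (𝓝[>] 0)
      (𝓝 (f y - f x - m / 2 * ‖y - x‖ ^ 2)) :=
    ((Continuous.tendsto' (by fun_prop) 0 _ (by simp))).mono_left nhdsWithin_le_nhds
  suffices ⟪∇ f x, y - x⟫ ≤ f y - f x - m / 2 * ‖y - x‖ ^ 2 by linarith
  refine le_of_tendsto_of_tendsto hslope hlim ?_
  filter_upwards [Ioo_mem_nhdsGT one_pos] with t ⟨ht0, ht1⟩
  have hconv := hf.2 (mem_univ x) (mem_univ y) (sub_nonneg.2 ht1.le) ht0.le (sub_add_cancel 1 t)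
  have hpt : x + t • (y - x) = (1 - t) • x + t • y := by module
  rw [smul_eq_mul, smul_eq_mul, norm_sub_rev, ← hpt] at hconv
  rw [slope_def_field, sub_zero, div_le_iff₀ ht0]
  simp only [φ, zero_smul, add_zero]
  linarith

lemma apply_le_add_inner_gradient_add_sq (hf : Differentiable ℝ f) {L : ℝ}
    (hLip : ∀ a b, ‖∇ f a - ∇ f b‖ ≤ L * ‖a - b‖) (x y : V) :
    f y ≤ f x + ⟪∇ f x, y - x⟫ + L / 2 * ‖y - x‖ ^ 2 := by
  set v := y - x
  set φ : ℝ → ℝ := fun t => f (x + t • v) - t * ⟪∇ f x, v⟫ - L / 2 * t ^ 2 * ‖v‖ ^ 2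
  have hderiv : ∀ t : ℝ, HasDerivAt φ (⟪∇ f (x + t • v) - ∇ f x, v⟫ - L * t * ‖v‖ ^ 2) t := by
    intro t
    have h := ((hasDerivAt_apply_add_smul (x := x) (v := v) (hf _)).sub
      ((hasDerivAt_id t).mul_const ⟪∇ f x, v⟫)).sub
      (((hasDerivAt_pow 2 t).const_mul (L / 2)).mul_const (‖v‖ ^ 2))
    exact h.congr_deriv (by rw [inner_sub_left]; ring)
  have hanti : AntitoneOn φ (Icc 0 1) := by
    refine antitoneOn_of_deriv_nonpos (convex_Icc 0 1)
      (HasDerivAt.continuousOn fun t _ => hderiv t)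
      (fun t _ => (hderiv t).differentiableAt.differentiableWithinAt) fun t ht => ?_
    rw [interior_Icc] at ht
    rw [(hderiv t).deriv, sub_nonpos]
    calc ⟪∇ f (x + t • v) - ∇ f x, v⟫ ≤ ‖∇ f (x + t • v) - ∇ f x‖ * ‖v‖ := real_inner_le_norm _ _
      _ ≤ L * ‖x + t • v - x‖ * ‖v‖ := by gcongr; exact hLip _ _
      _ = L * t * ‖v‖ ^ 2 := by
        rw [add_sub_cancel_left, norm_smul, Real.norm_of_nonneg ht.1.le]; ring
  have h01 := hanti (left_mem_Icc.2 zero_le_one) (right_mem_Icc.2 zero_le_one) zero_le_one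
  simp only [φ, v, zero_smul, add_zero, one_smul, add_sub_cancel] at h01
  linarith

lemma ConvexOn.sq_norm_gradient_sub_le (hf : Differentiable ℝ f) (hc : ConvexOn ℝ univ f)
    {L : ℝ} (hL : 0 < L) (hLip : ∀ a b, ‖∇ f a - ∇ f b‖ ≤ L * ‖a - b‖) (a b : V) :
    ‖∇ f b - ∇ f a‖ ^ 2 ≤ 2 * L * (f b - f a - ⟪∇ f a, b - a⟫) := by
  set Δ := ∇ f b - ∇ f a
  -- compare `f` at `z`, one gradient step away from `b`, with the tangent plane at `a`
  set z := b - L⁻¹ • Δ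
  have hlow := (strongConvexOn_zero.2 hc).add_inner_gradient_add_sq_le (hf a) z
  have hup := apply_le_add_inner_gradient_add_sq hf hLip b z
  have hΔ : ⟪∇ f b, Δ⟫ - ⟪∇ f a, Δ⟫ = ‖Δ‖ ^ 2 := by
    rw [← inner_sub_left, real_inner_self_eq_norm_sq]
  have hza : z - a = (b - a) - L⁻¹ • Δ := by simp only [z]; abel
  have hzb : z - b = -(L⁻¹ • Δ) := by simp only [z]; abel
  rw [hza, inner_sub_right, real_inner_smul_right] at hlow
  rw [hzb, inner_neg_right, real_inner_smul_right, norm_neg, norm_smul,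
    Real.norm_of_nonneg (inv_nonneg.2 hL.le)] at hup
  have key : L⁻¹ * ‖Δ‖ ^ 2 ≤ 2 * (f b - f a - ⟪∇ f a, b - a⟫) := by
    have hsq : L / 2 * (L⁻¹ * ‖Δ‖) ^ 2 = L⁻¹ * ‖Δ‖ ^ 2 / 2 := by field_simp
    have hΔ' : L⁻¹ * ⟪∇ f b, Δ⟫ - L⁻¹ * ⟪∇ f a, Δ⟫ = L⁻¹ * ‖Δ‖ ^ 2 := by rw [← mul_sub, hΔ]
    rw [zero_div, zero_mul, add_zero] at hlow
    linarith
  calc ‖Δ‖ ^ 2 = L * (L⁻¹ * ‖Δ‖ ^ 2) := by field_simp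
    _ ≤ L * (2 * (f b - f a - ⟪∇ f a, b - a⟫)) := by gcongr
    _ = _ := by ring

lemma ConvexOn.sq_norm_gradient_sub_le_inner (hf : Differentiable ℝ f) (hc : ConvexOn ℝ univ f)
    {L : ℝ} (hL : 0 < L) (hLip : ∀ a b, ‖∇ f a - ∇ f b‖ ≤ L * ‖a - b‖) (x y : V) :
    ‖∇ f x - ∇ f y‖ ^ 2 ≤ L * ⟪∇ f x - ∇ f y, x - y⟫ := by
  have hxy := hc.sq_norm_gradient_sub_le hf hL hLip x y
  have hyx := hc.sq_norm_gradient_sub_le hf hL hLip y x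
  rw [norm_sub_rev] at hxy
  rw [inner_sub_sub_eq]
  linarith

lemma StrongConvexOn.mul_sq_norm_sub_le_inner_gradient {m : ℝ} (hf : StrongConvexOn univ m f)
    (hd : Differentiable ℝ f) (x y : V) :
    m * ‖x - y‖ ^ 2 ≤ ⟪∇ f x - ∇ f y, x - y⟫ := by
  have hxy := hf.add_inner_gradient_add_sq_le (hd x) y
  have hyx := hf.add_inner_gradient_add_sq_le (hd y) x
  rw [norm_sub_rev] at hxy
  rw [inner_sub_sub_eq]
  linarith

lemma norm_sub_smul_gradient_sub_le {μ L η : ℝ} (hf : Differentiable ℝ f)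
    (hsc : StrongConvexOn univ μ f) (hμ : 0 ≤ μ) (hL : 0 < L)
    (hLip : ∀ a b, ‖∇ f a - ∇ f b‖ ≤ L * ‖a - b‖) (hη : 0 ≤ η) (hηL : η * L ≤ 1) (x y : V) :
    ‖(x - η • ∇ f x) - (y - η • ∇ f y)‖ ≤ (1 - η * μ / 2) * ‖x - y‖ := by
  set Δ := ∇ f x - ∇ f y
  have hmono := hsc.mul_sq_norm_sub_le_inner_gradient hf x y
  have hcoco := (hsc.convexOn fun _ => by positivity).sq_norm_gradient_sub_le_inner hf hL hLip x y
  have hsq : ‖(x - y) - η • Δ‖ ^ 2 ≤ (1 - η * μ) * ‖x - y‖ ^ 2 := by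
    rw [norm_sub_sq_real, real_inner_smul_right, norm_smul, Real.norm_of_nonneg hη,
      real_inner_comm]
    have hinner : 0 ≤ ⟪Δ, x - y⟫ := le_trans (by positivity) hmono
    have : η ^ 2 * ‖Δ‖ ^ 2 ≤ η * ⟪Δ, x - y⟫ := by
      calc η ^ 2 * ‖Δ‖ ^ 2 ≤ η ^ 2 * (L * ⟪Δ, x - y⟫) := by gcongr
        _ = (η * L) * (η * ⟪Δ, x - y⟫) := by ring
        _ ≤ η * ⟪Δ, x - y⟫ := mul_le_of_le_one_left (mul_nonneg hη hinner) hηL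
    nlinarith
  have heq : (x - η • ∇ f x) - (y - η • ∇ f y) = (x - y) - η • Δ := by module
  rw [heq]
  rcases le_or_gt (η * μ) 1 with hημ | hημ
  · rw [← pow_le_pow_iff_left₀ (norm_nonneg _) (by nlinarith [norm_nonneg (x - y)]) two_ne_zero]
    nlinarith [sq_nonneg (η * μ * ‖x - y‖)]
  · have hxy : ‖x - y‖ ^ 2 ≤ 0 := by nlinarith [sq_nonneg ‖(x - y) - η • Δ‖]
    obtain rfl : x = y := by simpa [sub_eq_zero] using hxy
    simp [Δ]

lemma isMinOn_proxObjective_sub_smul_gradient {r : V → ℝ} {L η : ℝ} {xs : V}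
    (hf : Differentiable ℝ f) (hLip : ∀ a b, ‖∇ f a - ∇ f b‖ ≤ L * ‖a - b‖) (hη : 0 ≤ η)
    (hηL : η * L ≤ 1) (hxs : ∀ z, f xs + r xs ≤ f z + r z) :
    IsMinOn (proxObjective r η (xs - η • ∇ f xs)) univ xs := by
  refine isMinOn_univ_iff.2 fun z => ?_
  have hdesc := apply_le_add_inner_gradient_add_sq hf hLip xs z
  have hmin : η * (f xs + r xs) ≤ η * (f z + r z) := mul_le_mul_of_nonneg_left (hxs z) hη
  have hgap : 0 ≤ (1 - η * L) * ‖z - xs‖ ^ 2 := mul_nonneg (by linarith) (sq_nonneg _)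
  have hz : z - (xs - η • ∇ f xs) = (z - xs) + η • ∇ f xs := by abel
  simp only [proxObjective, sub_sub_cancel, hz, norm_add_sq_real, norm_smul,
    real_inner_smul_right, Real.norm_of_nonneg hη, real_inner_comm (∇ f xs) (z - xs)]
  nlinarith [mul_le_mul_of_nonneg_left hdesc hη]

theorem norm_sub_minimizer_le_of_isMinOn_proxObjective {r : V → ℝ} {μ L η : ℝ} {x g p xs : V}
    (hf : Differentiable ℝ f) (hsc : StrongConvexOn univ μ f) (hμ : 0 < μ) (hL : 0 < L)
    (hLip : ∀ a b, ‖∇ f a - ∇ f b‖ ≤ L * ‖a - b‖) (hr : ConvexOn ℝ univ r) (hη : 0 < η)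
    (hηL : η * L ≤ 1) (hxs : ∀ z, f xs + r xs ≤ f z + r z)
    (hp : IsMinOn (proxObjective r η (x - η • g)) univ p) :
    ‖x - xs‖ ≤ 2 / (η * μ) * ‖p - x‖ + 2 / μ * ‖∇ f x - g‖ := by
  have hxs_fix := isMinOn_proxObjective_sub_smul_gradient hf hLip hη.le hηL hxs
  have hprox := norm_sub_le_norm_sub_of_isMinOn_proxObjective hr hη.le hp hxs_fix
  have hstep := norm_sub_smul_gradient_sub_le hf hsc hμ.le hL hLip hη.le hηL x xs
  have hsplit : (x - η • g) - (xs - η • ∇ f xs)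
      = ((x - η • ∇ f x) - (xs - η • ∇ f xs)) + η • (∇ f x - g) := by module
  have hinexact : ‖(x - η • g) - (xs - η • ∇ f xs)‖
      ≤ (1 - η * μ / 2) * ‖x - xs‖ + η * ‖∇ f x - g‖ := by
    rw [hsplit]
    refine (norm_add_le _ _).trans (add_le_add hstep ?_)
    rw [norm_smul, Real.norm_of_nonneg hη.le]
  have htri : ‖x - xs‖ ≤ ‖p - xs‖ + ‖p - x‖ := by
    linarith [norm_sub_le_norm_sub_add_norm_sub x p xs, norm_sub_rev x p]
  have hημ : 0 < η * μ := mul_pos hη hμ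
  calc ‖x - xs‖ = 2 / (η * μ) * (η * μ / 2 * ‖x - xs‖) := by field_simp
    _ ≤ 2 / (η * μ) * (‖p - x‖ + η * ‖∇ f x - g‖) := by gcongr; linarith
    _ = 2 / (η * μ) * ‖p - x‖ + 2 / μ * ‖∇ f x - g‖ := by field_simp

lemma hasGradientAt_const_mul_sum {ι : Type*} [Fintype ι] {F : ι → V → ℝ} {z : V}
    (hF : ∀ i, DifferentiableAt ℝ (F i) z) (c : ℝ) :
    HasGradientAt (fun y => c * ∑ i, F i y) (c • ∑ i, ∇ (F i) z) z := by
  rw [hasGradientAt_iff_hasFDerivAt]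
  refine ((HasFDerivAt.fun_sum fun i _ =>
    (hF i).hasGradientAt.hasFDerivAt).const_mul c).congr_fderiv ?_
  ext y
  simp

end Smooth

theorem stmt7_general
    {n m K : ℕ}
    (f : Fin m → EuclideanSpace ℝ (Fin n) → ℝ) (Li : Fin m → ℝ)
    (hLi : ∀ i, 0 ≤ Li i)
    (hdiff : ∀ i, Differentiable ℝ (f i))
    (hLip : ∀ i x y, ‖gradient (f i) x - gradient (f i) y‖ ≤ Li i * ‖x - y‖)
    (fs : EuclideanSpace ℝ (Fin n) → ℝ)
    (hfs : ∀ z, fs z = (m : ℝ)⁻¹ * ∑ i, f i z)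
    (L : ℝ) (hL : L = (m : ℝ)⁻¹ * ∑ i, Li i) (hLpos : 0 < L)
    (μ : ℝ) (hμ : 0 < μ)
    (hsc : ConvexOn ℝ Set.univ (fun z => fs z - μ / 2 * ‖z‖ ^ 2))
    (r : EuclideanSpace ℝ (Fin n) → ℝ)
    (hr : ConvexOn ℝ Set.univ r)
    (η : ℝ) (hη : 0 < η)
    (x : ℕ → EuclideanSpace ℝ (Fin n))
    (τ : Fin m → ℕ → ℕ) (hτ : ∀ i k, k - K ≤ τ i k ∧ τ i k ≤ k)
    (g : ℕ → EuclideanSpace ℝ (Fin n))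
    (hg : ∀ k, g k = (m : ℝ)⁻¹ • ∑ i, gradient (f i) (x (τ i k)))
    (hiter : ∀ (k : ℕ) (z : EuclideanSpace ℝ (Fin n)),
      1 / 2 * ‖x (k + 1) - (x k - η • g k)‖ ^ 2 + η * r (x (k + 1))
        ≤ 1 / 2 * ‖z - (x k - η • g k)‖ ^ 2 + η * r z)
    (d : ℕ → EuclideanSpace ℝ (Fin n)) (hd : ∀ k, d k = η⁻¹ • (x (k + 1) - x k))
    (xs : EuclideanSpace ℝ (Fin n)) (hxs : ∀ z, fs xs + r xs ≤ fs z + r z)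
    (hηle : η ≤ 1 / L)
    (Q : ℝ) (hQ : Q = L / μ)
    (k : ℕ) :
    ‖x k - xs‖ ≤ 2 / μ * ‖d k‖ + 2 * η * Q * ∑ j ∈ Finset.Ico (k - K) k, ‖d j‖ := by
  set c : ℝ := (m : ℝ)⁻¹
  have hc : 0 ≤ c := by positivity
  have hgrad : ∀ z, HasGradientAt fs (c • ∑ i, ∇ (f i) z) z := fun z =>
    (hasGradientAt_const_mul_sum (fun i => (hdiff i).differentiableAt) c).congr_of_eventuallyEq
      (.of_forall hfs)
  have hLip_fs : ∀ a b, ‖∇ fs a - ∇ fs b‖ ≤ L * ‖a - b‖ := fun a b => by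
    rw [(hgrad a).gradient, (hgrad b).gradient, hL, mul_assoc, Finset.sum_mul]
    exact norm_smul_sum_sub_smul_sum_le hc fun i => hLip i a b
  have hnorm_step : ∀ j, ‖x (j + 1) - x j‖ = η * ‖d j‖ := fun j => by
    rw [hd, norm_smul, Real.norm_of_nonneg (inv_nonneg.2 hη.le), mul_inv_cancel_left₀ hη.ne']
  set S := ∑ j ∈ Finset.Ico (k - K) k, ‖d j‖
  have herr : ‖∇ fs (x k) - g k‖ ≤ L * (η * S) := by
    rw [(hgrad _).gradient, hg, hL, mul_assoc, Finset.sum_mul]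
    refine norm_smul_sum_sub_smul_sum_le hc fun i =>
      (hLip i _ _).trans (mul_le_mul_of_nonneg_left ?_ (hLi i))
    calc ‖x k - x (τ i k)‖ ≤ ∑ j ∈ Finset.Ico (k - K) k, ‖x (j + 1) - x j‖ :=
          norm_sub_le_sum_Ico_norm_sub_s7 x (hτ i k).2 (hτ i k).1
      _ = η * S := by simp only [S, hnorm_step, Finset.mul_sum]
  have hηL : η * L ≤ 1 := (le_div_iff₀ hLpos).1 (by simpa using hηle)
  have key := norm_sub_minimizer_le_of_isMinOn_proxObjective (fun z => (hgrad z).differentiableAt)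
    (strongConvexOn_iff_convex.2 hsc) hμ hLpos hLip_fs hr hη hηL hxs (isMinOn_univ_iff.2 (hiter k))
  calc ‖x k - xs‖ ≤ 2 / (η * μ) * ‖x (k + 1) - x k‖ + 2 / μ * ‖∇ fs (x k) - g k‖ := key
    _ ≤ 2 / (η * μ) * (η * ‖d k‖) + 2 / μ * (L * (η * S)) := by rw [hnorm_step]; gcongr
    _ = 2 / μ * ‖d k‖ + 2 * η * Q * S := by rw [hQ]; field_simp

/-- Lemma 2 (distance to optimum for PIAG): for any `k ≥ 0` and `0 < η ≤ 1/L`,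
`‖x_k - x*‖ ≤ (2/μ)‖d_k‖ + 2ηQ ∑_{j=(k-K)₊}^{k-1} ‖d_j‖` with `Q = L/μ`. -/
theorem stmt7
    {n m K : ℕ} (hm : 0 < m)
    (f : Fin m → EuclideanSpace ℝ (Fin n) → ℝ) (Li : Fin m → ℝ)
    (hLi : ∀ i, 0 ≤ Li i)
    (hdiff : ∀ i, Differentiable ℝ (f i))
    (hLip : ∀ i x y, ‖gradient (f i) x - gradient (f i) y‖ ≤ Li i * ‖x - y‖)
    (fs : EuclideanSpace ℝ (Fin n) → ℝ)
    (hfs : ∀ z, fs z = (m : ℝ)⁻¹ * ∑ i, f i z)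
    (L : ℝ) (hL : L = (m : ℝ)⁻¹ * ∑ i, Li i) (hLpos : 0 < L)
    (μ : ℝ) (hμ : 0 < μ)
    (hsc : ConvexOn ℝ Set.univ (fun z => fs z - μ / 2 * ‖z‖ ^ 2))
    (r : EuclideanSpace ℝ (Fin n) → ℝ)
    (hr : ConvexOn ℝ Set.univ r) (hrlsc : LowerSemicontinuous r)
    (η : ℝ) (hη : 0 < η)
    (x : ℕ → EuclideanSpace ℝ (Fin n))
    (τ : Fin m → ℕ → ℕ) (hτ : ∀ i k, k - K ≤ τ i k ∧ τ i k ≤ k)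
    (g : ℕ → EuclideanSpace ℝ (Fin n))
    (hg : ∀ k, g k = (m : ℝ)⁻¹ • ∑ i, gradient (f i) (x (τ i k)))
    (hiter : ∀ (k : ℕ) (z : EuclideanSpace ℝ (Fin n)),
      1 / 2 * ‖x (k + 1) - (x k - η • g k)‖ ^ 2 + η * r (x (k + 1))
        ≤ 1 / 2 * ‖z - (x k - η • g k)‖ ^ 2 + η * r z)
    (d : ℕ → EuclideanSpace ℝ (Fin n)) (hd : ∀ k, d k = η⁻¹ • (x (k + 1) - x k))
    (xs : EuclideanSpace ℝ (Fin n)) (hxs : ∀ z, fs xs + r xs ≤ fs z + r z)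
    (Fk : ℕ → ℝ) (hFk : ∀ k, Fk k = fs (x k) + r (x k) - (fs xs + r xs))
    (hηle : η ≤ 1 / L)
    (Q : ℝ) (hQ : Q = L / μ)
    (k : ℕ) :
    ‖x k - xs‖ ≤ 2 / μ * ‖d k‖ + 2 * η * Q * ∑ j ∈ Finset.Ico (k - K) k, ‖d j‖ :=
  stmt7_general f Li hLi hdiff hLip fs hfs L hL hLpos μ hμ hsc r hr η hη x τ hτ g hg hiter d hd xs
    hxs hηle Q hQ k
end

section
/- Let f : ℝ^n → ℝ be L-smooth and μ-strongly convex, r proper closed convex, x* the minimizer of f + r, and for 0 < η ≤ 1/L define d' = (prox_r^η(x − η∇f(x)) − x)/η. Then μ‖x − x*‖ ≤ 2‖d'‖. -/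
/-!
Three first-order facts do all the work. The prox step `q = x + η d'` satisfies the variational
inequality of its defining minimisation, `x*` satisfies the optimality condition of `f + r`, and
`∇f` is `μ`-strongly monotone. Testing the first at `x*` and the second at `q` and adding them
cancels `r`, leaving `⟪d' + ∇f x - ∇f x*, (x - x*) + η d'⟫ ≤ 0`. Expanding, strong monotonicity
bounds `μ‖x - x*‖²` by `‖d'‖‖x - x*‖ + η‖∇f x - ∇f x*‖‖d'‖`, and `η L ≤ 1` turns the second term
into another `‖d'‖‖x - x*‖`.
-/

open Set Filter Topology RealInnerProductSpace

theorem ConvexOn.apply_add_smul_sub_le {E : Type*} [AddCommGroup E] [Module ℝ E] {φ : E → ℝ}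
    (hφ : ConvexOn ℝ univ φ) (a z : E) {t : ℝ} (ht₀ : 0 ≤ t) (ht₁ : t ≤ 1) :
    φ (a + t • (z - a)) ≤ φ a + t * (φ z - φ a) := by
  have := hφ.2 (mem_univ a) (mem_univ z) (sub_nonneg.2 ht₁) ht₀ (sub_add_cancel 1 t)
  rw [show (1 - t) • a + t • z = a + t • (z - a) by module, smul_eq_mul, smul_eq_mul] at this
  linarith

section FirstOrder

variable {E : Type*} [NormedAddCommGroup E] [InnerProductSpace ℝ E] [CompleteSpace E]

theorem HasGradientAt.sub {f g : E → ℝ} {f' g' x : E} (hf : HasGradientAt f f' x)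
    (hg : HasGradientAt g g' x) : HasGradientAt (fun z => f z - g z) (f' - g') x := by
  rw [hasGradientAt_iff_hasFDerivAt, map_sub] at *
  exact hf.sub hg

theorem hasGradientAt_mul_norm_sub_sq (c : ℝ) (y x : E) :
    HasGradientAt (fun z => c / 2 * ‖z - y‖ ^ 2) (c • (x - y)) x := by
  rw [hasGradientAt_iff_hasFDerivAt]
  refine ((((hasFDerivAt_id x).sub_const y).norm_sq).const_mul (c / 2)).congr_fderiv ?_
  ext v
  simp only [ContinuousLinearMap.comp_id, smul_apply, coe_innerSL_apply, nsmul_eq_mul,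
    smul_eq_mul, InnerProductSpace.toDual_apply_apply, real_inner_smul_left, id_eq]
  ring

theorem HasGradientAt.le_inner_of_forall_mul_le {h : E → ℝ} {g a v : E} {c : ℝ}
    (hh : HasGradientAt h g a) (hle : ∀ t ∈ Ioo (0 : ℝ) 1, t * c ≤ h (a + t • v) - h a) :
    c ≤ ⟪g, v⟫ := by
  rw [hasGradientAt_iff_hasFDerivAt] at hh
  have hslope := (hh.hasLineDerivAt v).tendsto_slope_zero_right
  rw [InnerProductSpace.toDual_apply_apply] at hslope
  refine ge_of_tendsto hslope ?_
  filter_upwards [Ioo_mem_nhdsGT one_pos] with t ht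
  rw [smul_eq_mul, le_inv_mul_iff₀ ht.1]
  exact hle t ht

theorem ConvexOn.sub_le_inner_of_hasGradientAt_of_forall_le {h r : E → ℝ} {g a : E}
    (hh : HasGradientAt h g a) (hr : ConvexOn ℝ univ r)
    (hmin : ∀ z, h a + r a ≤ h z + r z) (z : E) : r a - r z ≤ ⟪g, z - a⟫ := by
  refine hh.le_inner_of_forall_mul_le fun t ht => ?_
  linarith [hmin (a + t • (z - a)), hr.apply_add_smul_sub_le a z ht.1.le ht.2.le]

theorem ConvexOn.inner_le_sub_of_hasGradientAt {φ : E → ℝ} {g a : E}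
    (hφ : ConvexOn ℝ univ φ) (hg : HasGradientAt φ g a) (y : E) : ⟪g, y - a⟫ ≤ φ y - φ a := by
  have hneg : HasGradientAt (fun z => 0 - φ z) (0 - g) a := (hasGradientAt_const a 0).sub hg
  have := hneg.le_inner_of_forall_mul_le (c := φ a - φ y) (v := y - a) fun t ht => by
    linarith [hφ.apply_add_smul_sub_le a y ht.1.le ht.2.le]
  rw [zero_sub, inner_neg_left] at this
  linarith

theorem ConvexOn.inner_sub_nonneg_of_hasGradientAt {φ : E → ℝ} {gx gy x y : E}
    (hφ : ConvexOn ℝ univ φ) (hx : HasGradientAt φ gx x) (hy : HasGradientAt φ gy y) :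
    0 ≤ ⟪gx - gy, x - y⟫ := by
  have h₁ := hφ.inner_le_sub_of_hasGradientAt hx y
  have h₂ := hφ.inner_le_sub_of_hasGradientAt hy x
  rw [← neg_sub x y, inner_neg_right] at h₁
  rw [inner_sub_left]
  linarith

theorem mul_norm_sub_sq_le_inner_gradient_sub {f : E → ℝ} (hf : Differentiable ℝ f) {μ : ℝ}
    (hsc : ConvexOn ℝ univ fun z => f z - μ / 2 * ‖z‖ ^ 2) (x y : E) :
    μ * ‖x - y‖ ^ 2 ≤ ⟪gradient f x - gradient f y, x - y⟫ := by
  have hgrad (z : E) : HasGradientAt (fun z => f z - μ / 2 * ‖z‖ ^ 2) (gradient f z - μ • z) z :=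
    (hf z).hasGradientAt.sub (by simpa using hasGradientAt_mul_norm_sub_sq μ 0 z)
  have := hsc.inner_sub_nonneg_of_hasGradientAt (hgrad x) (hgrad y)
  rwa [sub_sub_sub_comm, ← smul_sub, inner_sub_left, real_inner_smul_left,
    real_inner_self_eq_norm_sq, sub_nonneg] at this

end FirstOrder

theorem mul_norm_le_two_mul_norm_of_inner_nonpos {E : Type*} [NormedAddCommGroup E]
    [InnerProductSpace ℝ E] {u d G : E} {μ η : ℝ} (hη : 0 ≤ η)
    (hmono : μ * ‖u‖ ^ 2 ≤ ⟪G, u⟫) (hcomb : ⟪d + G, u + η • d⟫ ≤ 0) (hG : η * ‖G‖ ≤ ‖u‖) :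
    μ * ‖u‖ ≤ 2 * ‖d‖ := by
  rw [inner_add_left, inner_add_right, inner_add_right, real_inner_smul_right,
    real_inner_smul_right, real_inner_self_eq_norm_sq] at hcomb
  have hdu := neg_le_of_abs_le ((abs_real_inner_le_norm d u).trans_eq (mul_comm _ _))
  have hGd := neg_le_of_abs_le (abs_real_inner_le_norm G d)
  have hηGd : η * ‖G‖ * ‖d‖ ≤ ‖u‖ * ‖d‖ := mul_le_mul_of_nonneg_right hG (norm_nonneg d)
  have hsq : μ * ‖u‖ * ‖u‖ ≤ 2 * ‖d‖ * ‖u‖ := by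
    nlinarith [mul_nonneg hη (sq_nonneg ‖d‖)]
  rcases (norm_nonneg u).eq_or_lt with hu | hu
  · rw [← hu, mul_zero]
    positivity
  · exact le_of_mul_le_mul_right hsq hu

theorem stmt8_general {n : ℕ} (f : EuclideanSpace ℝ (Fin n) → ℝ)
    (hdiff : Differentiable ℝ f)
    (L μ : ℝ) (hL : 0 < L)
    (hLip : ∀ x y, ‖gradient f x - gradient f y‖ ≤ L * ‖x - y‖)
    (hsc : ConvexOn ℝ Set.univ (fun z => f z - μ / 2 * ‖z‖ ^ 2))
    (r : EuclideanSpace ℝ (Fin n) → ℝ)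
    (hr : ConvexOn ℝ Set.univ r)
    (η : ℝ) (hη : 0 < η) (hηL : η ≤ 1 / L)
    (p : EuclideanSpace ℝ (Fin n) → EuclideanSpace ℝ (Fin n))
    (hp : ∀ y z, 1 / 2 * ‖p y - y‖ ^ 2 + η * r (p y) ≤ 1 / 2 * ‖z - y‖ ^ 2 + η * r z)
    (xs : EuclideanSpace ℝ (Fin n)) (hxs : ∀ z, f xs + r xs ≤ f z + r z)
    (x d' : EuclideanSpace ℝ (Fin n))
    (hd' : d' = η⁻¹ • (p (x - η • gradient f x) - x)) :
    μ * ‖x - xs‖ ≤ 2 * ‖d'‖ := by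
  set g := gradient f
  set y := x - η • g x
  have hq : p y = x + η • d' := by
    rw [hd', smul_smul, mul_inv_cancel₀ hη.ne', one_smul, add_sub_cancel]
  have hprox : η * r (p y) - η * r xs ≤ ⟪p y - y, xs - p y⟫ := by
    simpa using (hr.smul hη.le).sub_le_inner_of_hasGradientAt_of_forall_le
      (hasGradientAt_mul_norm_sub_sq 1 y (p y)) (hp y) xs
  have hopt := hr.sub_le_inner_of_hasGradientAt_of_forall_le (hdiff xs).hasGradientAt hxs (p y)
  have hG : η * ‖g x - g xs‖ ≤ ‖x - xs‖ := by
    have hηL' : η * L ≤ 1 := (le_div_iff₀ hL).1 hηL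
    nlinarith [hLip x xs, norm_nonneg (x - xs)]
  refine mul_norm_le_two_mul_norm_of_inner_nonpos hη.le
    (mul_norm_sub_sq_le_inner_gradient_sub hdiff hsc x xs) ?_ hG
  have hsum : ⟪p y - y, xs - p y⟫ + η * ⟪g xs, p y - xs⟫
      = -η * ⟪d' + (g x - g xs), (x - xs) + η • d'⟫ := by
    rw [hq, show x + η • d' - y = η • (d' + g x) by module,
      show xs - (x + η • d') = -((x - xs) + η • d') by abel,
      show x + η • d' - xs = (x - xs) + η • d' by abel]
    simp only [inner_neg_right, real_inner_smul_left, inner_add_left, inner_sub_left]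
    ring
  exact nonpos_of_mul_nonpos_right (by linarith [mul_le_mul_of_nonneg_left hopt hη.le]) hη

/-- Key step of Lemma 2 (full-gradient case): for `f` `L`-smooth and `μ`-strongly
convex, `r` convex, `x*` the minimizer of `f + r`, `0 < η ≤ 1/L`, and
`d' = (prox_r^η(x - η∇f(x)) - x)/η`, one has `μ‖x - x*‖ ≤ 2‖d'‖`. -/
theorem stmt8 {n : ℕ} (f : EuclideanSpace ℝ (Fin n) → ℝ)
    (hdiff : Differentiable ℝ f)
    (L μ : ℝ) (hL : 0 < L) (hμ : 0 < μ)
    (hLip : ∀ x y, ‖gradient f x - gradient f y‖ ≤ L * ‖x - y‖)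
    (hsc : ConvexOn ℝ Set.univ (fun z => f z - μ / 2 * ‖z‖ ^ 2))
    (r : EuclideanSpace ℝ (Fin n) → ℝ)
    (hr : ConvexOn ℝ Set.univ r) (hrlsc : LowerSemicontinuous r)
    (η : ℝ) (hη : 0 < η) (hηL : η ≤ 1 / L)
    (p : EuclideanSpace ℝ (Fin n) → EuclideanSpace ℝ (Fin n))
    (hp : ∀ y z, 1 / 2 * ‖p y - y‖ ^ 2 + η * r (p y) ≤ 1 / 2 * ‖z - y‖ ^ 2 + η * r z)
    (xs : EuclideanSpace ℝ (Fin n)) (hxs : ∀ z, f xs + r xs ≤ f z + r z)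
    (x d' : EuclideanSpace ℝ (Fin n))
    (hd' : d' = η⁻¹ • (p (x - η • gradient f x) - x)) :
    μ * ‖x - xs‖ ≤ 2 * ‖d'‖ :=
  stmt8_general f hdiff L μ hL hLip hsc r hr η hη hηL p hp xs hxs x d' hd'
end

section
/- Under Assumptions 1 and 2, for any step size 0 < η ≤ 1/(L(K+1)), the PIAG direction satisfies −‖d_k‖² ≤ −(μ/4) F_{k+1} + ηL Σ_{j=(k−K)_+}^{k−1} ‖d_j‖², where F_{k+1} = F(x_{k+1}) − F(x*). -/
/-!
Write `y = x_{k+1}` and `e = ∇f(y) - g_k` for the error of the delayed gradient. Optimality of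
the proximal step makes `-(d_k + g_k)` a subgradient of `r` at `y`; adding the strong convexity
inequality of `f` at `y` gives `F(y) - F(x*) + (μ/2)‖x* - y‖² ≤ ⟪d_k + g_k - ∇f(y), x* - y⟫`,
and Young's inequality turns this into `μ (F(y) - F(x*)) ≤ ‖d_k‖² + ‖e‖²`. Each delayed iterate
is at most `K + 1` steps away from `y`, so `‖e‖ ≤ L η ∑ ‖d_j‖` over that window, and by
Cauchy–Schwarz and `η L (K + 1) ≤ 1` this gives `‖e‖² ≤ η L ∑ ‖d_j‖²`.
-/

open Finset Set AffineMap

open scoped RealInnerProductSpace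

theorem le_of_hasDerivAt_of_sub_le_mul {q : ℝ → ℝ} {q' c : ℝ} (hq : HasDerivAt q q' 0)
    (h : ∀ t ∈ Ioc (0 : ℝ) 1, q t - q 0 ≤ t * c) : q' ≤ c := by
  refine le_of_tendsto ((hasDerivWithinAt_iff_tendsto_slope' self_notMem_Ioi).mp
    hq.hasDerivWithinAt) ?_
  filter_upwards [Ioc_mem_nhdsGT zero_lt_one] with t ht
  rw [slope_def_field, sub_zero, div_le_iff₀ ht.1]
  linarith [h t ht]

theorem sq_sum_Ico_sub_le (a : ℕ → ℝ) (k K : ℕ) :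
    (∑ j ∈ Ico (k - K) (k + 1), a j) ^ 2 ≤ (K + 1) * ∑ j ∈ Ico (k - K) (k + 1), a j ^ 2 := by
  refine (sq_sum_le_card_mul_sum_sq ..).trans
    (mul_le_mul_of_nonneg_right ?_ (sum_nonneg fun j _ => sq_nonneg _))
  rw [Nat.card_Ico]
  exact_mod_cast (by omega : k + 1 - (k - K) ≤ K + 1)

section InnerProductSpace

variable {E : Type*} [NormedAddCommGroup E] [InnerProductSpace ℝ E]

theorem two_mul_mul_inner_le (μ : ℝ) (v w : E) :
    2 * μ * ⟪v, w⟫ ≤ ‖v‖ ^ 2 + μ ^ 2 * ‖w‖ ^ 2 := by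
  have h := norm_sub_sq_real v (μ • w)
  rw [real_inner_smul_right, norm_smul, mul_pow, Real.norm_eq_abs, sq_abs] at h
  linarith [sq_nonneg ‖v - μ • w‖]

/-- Along the segment from `a` to `w`, convexity bounds `φ` by its chord, so the smooth part
`t ↦ ½‖lineMap a w t - u‖²` must not decrease faster than the chord's slope `φ w - φ a`. -/
theorem ConvexOn.inner_sub_le_sub_of_isMinOn {φ : E → ℝ} (hφ : ConvexOn ℝ univ φ) {u a : E}
    (hmin : IsMinOn (fun z => 1 / 2 * ‖z - u‖ ^ 2 + φ z) univ a) (w : E) :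
    ⟪u - a, w - a⟫ ≤ φ w - φ a := by
  have hq : HasDerivAt (fun t : ℝ => -(1 / 2 * ‖lineMap a w t - u‖ ^ 2)) (-⟪a - u, w - a⟫) 0 := by
    have h := (((hasDerivAt_lineMap (a := a) (b := w) (x := (0 : ℝ))).sub_const u).norm_sq
      |>.const_mul (1 / 2)).neg
    rw [lineMap_apply_zero] at h
    exact h.congr_deriv (by ring)
  rw [← neg_sub a u, inner_neg_left]
  refine le_of_hasDerivAt_of_sub_le_mul hq fun t ht => ?_
  have hchord : φ (lineMap a w t) ≤ (1 - t) * φ a + t * φ w := by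
    simpa only [lineMap_apply_module, smul_eq_mul] using
      hφ.2 (mem_univ a) (mem_univ w) (sub_nonneg.2 ht.2) ht.1.le (sub_add_cancel 1 t)
  have hle := isMinOn_univ_iff.1 hmin (lineMap a w t)
  simp only [lineMap_apply_zero] at hle ⊢
  linarith

theorem norm_smul_sum_sub_le {ι : Type*} (s : Finset ι) {c : ℝ} (hc : 0 ≤ c)
    {F : ι → E → E} {Li : ι → ℝ} (hLi : ∀ i, 0 ≤ Li i)
    (hF : ∀ i a b, ‖F i a - F i b‖ ≤ Li i * ‖a - b‖) {y : E} {z : ι → E} {D : ℝ}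
    (hD : ∀ i ∈ s, ‖y - z i‖ ≤ D) :
    ‖c • ∑ i ∈ s, (F i y - F i (z i))‖ ≤ c * ∑ i ∈ s, Li i * D := by
  rw [norm_smul, Real.norm_of_nonneg hc]
  gcongr
  exact (norm_sum_le _ _).trans (sum_le_sum fun i hi =>
    (hF i _ _).trans (mul_le_mul_of_nonneg_left (hD i hi) (hLi i)))

theorem norm_sub_le_mul_sum_Ico {x d : ℕ → E} {η : ℝ} (hη : 0 ≤ η)
    (hstep : ∀ j, x (j + 1) - x j = η • d j) {a b c : ℕ} (hab : a ≤ b) (hbc : b ≤ c) :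
    ‖x c - x b‖ ≤ η * ∑ j ∈ Ico a c, ‖d j‖ :=
  calc ‖x c - x b‖ = dist (x b) (x c) := by rw [dist_comm, dist_eq_norm]
    _ ≤ ∑ j ∈ Ico b c, dist (x j) (x (j + 1)) := dist_le_Ico_sum_dist x hbc
    _ = ∑ j ∈ Ico b c, η * ‖d j‖ := sum_congr rfl fun j _ => by
      rw [dist_comm, dist_eq_norm, hstep, norm_smul, Real.norm_of_nonneg hη]
    _ ≤ ∑ j ∈ Ico a c, η * ‖d j‖ :=
      sum_le_sum_of_subset_of_nonneg (Ico_subset_Ico_left hab) fun j _ _ => by positivity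
    _ = η * ∑ j ∈ Ico a c, ‖d j‖ := (mul_sum _ _ _).symm

theorem norm_sq_smul_sum_delayed_sub_le {m K k : ℕ} {F : Fin m → E → E} {Li : Fin m → ℝ}
    (hLi : ∀ i, 0 ≤ Li i) (hF : ∀ i a b, ‖F i a - F i b‖ ≤ Li i * ‖a - b‖)
    {L : ℝ} (hL : L = (m : ℝ)⁻¹ * ∑ i, Li i) {η : ℝ} (hη : 0 ≤ η) (hηL : η * (L * (K + 1)) ≤ 1)
    {x d : ℕ → E} (hstep : ∀ j, x (j + 1) - x j = η • d j)
    {τ : Fin m → ℕ} (hτ : ∀ i, k - K ≤ τ i ∧ τ i ≤ k) :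
    ‖(m : ℝ)⁻¹ • ∑ i, (F i (x (k + 1)) - F i (x (τ i)))‖ ^ 2
      ≤ η * L * ∑ j ∈ Ico (k - K) (k + 1), ‖d j‖ ^ 2 := by
  set S := ∑ j ∈ Ico (k - K) (k + 1), ‖d j‖
  set Q := ∑ j ∈ Ico (k - K) (k + 1), ‖d j‖ ^ 2
  have hL0 : 0 ≤ L := hL ▸ mul_nonneg (by positivity) (sum_nonneg fun i _ => hLi i)
  have herr : ‖(m : ℝ)⁻¹ • ∑ i, (F i (x (k + 1)) - F i (x (τ i)))‖ ≤ L * (η * S) := by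
    refine (norm_smul_sum_sub_le _ (inv_nonneg.2 m.cast_nonneg) hLi hF fun i _ =>
      norm_sub_le_mul_sum_Ico hη hstep (hτ i).1 (Nat.le_succ_of_le (hτ i).2)).trans_eq ?_
    rw [hL, ← sum_mul, mul_assoc]
  calc _ ≤ (L * (η * S)) ^ 2 := pow_le_pow_left₀ (norm_nonneg _) herr 2
    _ = η * L * (η * L) * S ^ 2 := by ring
    _ ≤ η * L * (η * L) * ((K + 1) * Q) := by
      gcongr
      exact sq_sum_Ico_sub_le _ k K
    _ = η * L * (η * (L * (K + 1))) * Q := by ring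
    _ ≤ η * L * 1 * Q := by gcongr
    _ = η * L * Q := by ring

variable [CompleteSpace E]

theorem ConvexOn.add_inner_le_of_hasGradientAt {g : E → ℝ} (hg : ConvexOn ℝ univ g) {x G : E}
    (hG : HasGradientAt g G x) (y : E) : g x + ⟪G, y - x⟫ ≤ g y := by
  have hφ : HasDerivAt (g ∘ lineMap (k := ℝ) x y) ⟪G, y - x⟫ 0 := by
    have hG' : HasFDerivAt g (InnerProductSpace.toDual ℝ E G) (lineMap x y (0 : ℝ)) := by
      rw [lineMap_apply_zero]
      exact hasGradientAt_iff_hasFDerivAt.1 hG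
    simpa using hG'.comp_hasDerivAt (0 : ℝ) hasDerivAt_lineMap
  have h := (hg.comp_affineMap (lineMap (k := ℝ) x y)).le_slope_of_hasDerivAt (mem_univ 0)
    (mem_univ 1) zero_lt_one hφ
  simp only [slope_def_field, Function.comp_apply, lineMap_apply_one, lineMap_apply_zero,
    sub_zero, div_one] at h
  linarith

theorem StrongConvexOn.add_inner_add_le_of_hasGradientAt {f : E → ℝ} {μ : ℝ}
    (hf : StrongConvexOn univ μ f) {x G : E} (hG : HasGradientAt f G x) (y : E) :
    f x + ⟪G, y - x⟫ + μ / 2 * ‖y - x‖ ^ 2 ≤ f y := by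
  have hq : HasFDerivAt (fun z => μ / 2 * ‖z‖ ^ 2) (InnerProductSpace.toDual ℝ E (μ • x)) x := by
    refine ((hasStrictFDerivAt_norm_sq x).hasFDerivAt.const_mul (μ / 2)).congr_fderiv ?_
    ext v
    simp only [smul_apply, coe_innerSL_apply, nsmul_eq_mul, Nat.cast_ofNat,
      smul_eq_mul, map_smul, InnerProductSpace.toDual_apply_apply]
    ring
  have hGq : HasGradientAt (fun z => f z - μ / 2 * ‖z‖ ^ 2) (G - μ • x) x := by
    rw [hasGradientAt_iff_hasFDerivAt, map_sub]
    exact (hasGradientAt_iff_hasFDerivAt.1 hG).sub hq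
  have h := (strongConvexOn_iff_convex.1 hf).add_inner_le_of_hasGradientAt hGq y
  rw [inner_sub_left, real_inner_smul_left] at h
  have hsq : ‖y‖ ^ 2 = ‖y - x‖ ^ 2 + 2 * ⟪x, y - x⟫ + ‖x‖ ^ 2 := by
    rw [← sub_add_cancel y x, norm_add_sq_real, sub_add_cancel, real_inner_comm]
  linear_combination h - μ / 2 * hsq

theorem hasGradientAt_const_mul_sum_s10 {ι : Type*} (s : Finset ι) (c : ℝ) {f : ι → E → ℝ} {x : E}
    (hf : ∀ i ∈ s, DifferentiableAt ℝ (f i) x) :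
    HasGradientAt (fun z => c * ∑ i ∈ s, f i z) (c • ∑ i ∈ s, gradient (f i) x) x := by
  rw [hasGradientAt_iff_hasFDerivAt, map_smul, map_sum]
  exact (HasFDerivAt.fun_sum fun i hi =>
    hasGradientAt_iff_hasFDerivAt.1 (hf i hi).hasGradientAt).const_mul c

theorem StrongConvexOn.mul_sub_le_of_isMinOn_prox {fs r : E → ℝ} {μ η : ℝ}
    (hμ : 0 ≤ μ) (hη : 0 < η) (hfs : StrongConvexOn univ μ fs) (hr : ConvexOn ℝ univ r)
    {x g y d G : E} (hG : HasGradientAt fs G y)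
    (hmin : IsMinOn (fun z => 1 / 2 * ‖z - (x - η • g)‖ ^ 2 + η * r z) univ y)
    (hd : y - x = η • d) (xs : E) :
    μ * (fs y + r y - (fs xs + r xs)) ≤ ‖d‖ ^ 2 + ‖G - g‖ ^ 2 := by
  have hprox := (hr.smul hη.le).inner_sub_le_sub_of_isMinOn hmin xs
  have hres : x - η • g - y = -(η • (d + g)) := by
    rw [smul_add, ← hd]
    abel
  rw [hres, inner_neg_left, real_inner_smul_left] at hprox
  have hsubgrad : r y - ⟪d + g, xs - y⟫ ≤ r xs := by
    simp only [smul_eq_mul] at hprox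
    nlinarith
  have hsc := hfs.add_inner_add_le_of_hasGradientAt hG xs
  have hyoung := two_mul_mul_inner_le μ (d + g - G) (xs - y)
  rw [inner_sub_left] at hyoung
  have hsplit : ‖d + g - G‖ ^ 2 ≤ 2 * ‖d‖ ^ 2 + 2 * ‖G - g‖ ^ 2 := by
    have h := norm_sub_le d (G - g)
    rw [show d - (G - g) = d + g - G by abel] at h
    nlinarith [norm_nonneg (d + g - G), sq_nonneg (‖d‖ - ‖G - g‖)]
  nlinarith

end InnerProductSpace

theorem stmt10_general
    {n m K : ℕ}
    (f : Fin m → EuclideanSpace ℝ (Fin n) → ℝ) (Li : Fin m → ℝ)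
    (hLi : ∀ i, 0 ≤ Li i)
    (hdiff : ∀ i, Differentiable ℝ (f i))
    (hLip : ∀ i x y, ‖gradient (f i) x - gradient (f i) y‖ ≤ Li i * ‖x - y‖)
    (fs : EuclideanSpace ℝ (Fin n) → ℝ)
    (hfs : ∀ z, fs z = (m : ℝ)⁻¹ * ∑ i, f i z)
    (L : ℝ) (hL : L = (m : ℝ)⁻¹ * ∑ i, Li i)
    (μ : ℝ) (hμ : 0 < μ)
    (hsc : ConvexOn ℝ Set.univ (fun z => fs z - μ / 2 * ‖z‖ ^ 2))
    (r : EuclideanSpace ℝ (Fin n) → ℝ)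
    (hr : ConvexOn ℝ Set.univ r)
    (η : ℝ) (hη : 0 < η)
    (x : ℕ → EuclideanSpace ℝ (Fin n))
    (τ : Fin m → ℕ → ℕ) (hτ : ∀ i k, k - K ≤ τ i k ∧ τ i k ≤ k)
    (g : ℕ → EuclideanSpace ℝ (Fin n))
    (hg : ∀ k, g k = (m : ℝ)⁻¹ • ∑ i, gradient (f i) (x (τ i k)))
    (hiter : ∀ (k : ℕ) (z : EuclideanSpace ℝ (Fin n)),
      1 / 2 * ‖x (k + 1) - (x k - η • g k)‖ ^ 2 + η * r (x (k + 1))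
        ≤ 1 / 2 * ‖z - (x k - η • g k)‖ ^ 2 + η * r z)
    (d : ℕ → EuclideanSpace ℝ (Fin n)) (hd : ∀ k, d k = η⁻¹ • (x (k + 1) - x k))
    (xs : EuclideanSpace ℝ (Fin n))
    (Fk : ℕ → ℝ) (hFk : ∀ k, Fk k = fs (x k) + r (x k) - (fs xs + r xs))
    (hηle : η ≤ 1 / (L * (K + 1)))
    (k : ℕ) :
    -‖d k‖ ^ 2 ≤ -(μ / 4) * Fk (k + 1)
      + η * L * ∑ j ∈ Finset.Ico (k - K) k, ‖d j‖ ^ 2 := by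
  have hstep (j : ℕ) : x (j + 1) - x j = η • d j := by rw [hd j, smul_inv_smul₀ hη.ne']
  have hL0 : 0 ≤ L := hL ▸ mul_nonneg (by positivity) (sum_nonneg fun i _ => hLi i)
  have hηLK : η * (L * (K + 1)) ≤ 1 := mul_le_of_le_div₀ zero_le_one (by positivity) hηle
  have hηL : η * L ≤ 1 := by nlinarith [mul_nonneg hη.le hL0]
  have hG : HasGradientAt fs ((m : ℝ)⁻¹ • ∑ i, gradient (f i) (x (k + 1))) (x (k + 1)) :=
    funext hfs ▸ hasGradientAt_const_mul_sum_s10 _ _ fun i _ => (hdiff i).differentiableAt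
  have hgap := (strongConvexOn_iff_convex.2 hsc).mul_sub_le_of_isMinOn_prox hμ.le hη hr hG
    (isMinOn_univ_iff.2 (hiter k)) (hstep k) xs
  have herr := norm_sq_smul_sum_delayed_sub_le hLi hLip hL hη.le hηLK hstep (fun i => hτ i k)
  rw [sum_sub_distrib, smul_sub, ← hg k, sum_Ico_succ_top (Nat.sub_le k K)] at herr
  rw [← hFk] at hgap
  have hQ : 0 ≤ ∑ j ∈ Ico (k - K) k, ‖d j‖ ^ 2 := sum_nonneg fun j _ => sq_nonneg _
  nlinarith [mul_nonneg (mul_nonneg hη.le hL0) hQ, mul_le_of_le_one_left (sq_nonneg ‖d k‖) hηL]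

/-- Lemma 3 of the paper: for `0 < η ≤ 1/(L(K+1))`, the PIAG direction satisfies
`-‖d_k‖² ≤ -(μ/4) F_{k+1} + ηL ∑_{j=(k-K)₊}^{k-1} ‖d_j‖²`. -/
theorem stmt10
    {n m K : ℕ} (hm : 0 < m)
    (f : Fin m → EuclideanSpace ℝ (Fin n) → ℝ) (Li : Fin m → ℝ)
    (hLi : ∀ i, 0 ≤ Li i)
    (hdiff : ∀ i, Differentiable ℝ (f i))
    (hLip : ∀ i x y, ‖gradient (f i) x - gradient (f i) y‖ ≤ Li i * ‖x - y‖)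
    (fs : EuclideanSpace ℝ (Fin n) → ℝ)
    (hfs : ∀ z, fs z = (m : ℝ)⁻¹ * ∑ i, f i z)
    (L : ℝ) (hL : L = (m : ℝ)⁻¹ * ∑ i, Li i) (hLpos : 0 < L)
    (μ : ℝ) (hμ : 0 < μ)
    (hsc : ConvexOn ℝ Set.univ (fun z => fs z - μ / 2 * ‖z‖ ^ 2))
    (r : EuclideanSpace ℝ (Fin n) → ℝ)
    (hr : ConvexOn ℝ Set.univ r) (hrlsc : LowerSemicontinuous r)
    (η : ℝ) (hη : 0 < η)
    (x : ℕ → EuclideanSpace ℝ (Fin n))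
    (τ : Fin m → ℕ → ℕ) (hτ : ∀ i k, k - K ≤ τ i k ∧ τ i k ≤ k)
    (g : ℕ → EuclideanSpace ℝ (Fin n))
    (hg : ∀ k, g k = (m : ℝ)⁻¹ • ∑ i, gradient (f i) (x (τ i k)))
    (hiter : ∀ (k : ℕ) (z : EuclideanSpace ℝ (Fin n)),
      1 / 2 * ‖x (k + 1) - (x k - η • g k)‖ ^ 2 + η * r (x (k + 1))
        ≤ 1 / 2 * ‖z - (x k - η • g k)‖ ^ 2 + η * r z)
    (d : ℕ → EuclideanSpace ℝ (Fin n)) (hd : ∀ k, d k = η⁻¹ • (x (k + 1) - x k))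
    (xs : EuclideanSpace ℝ (Fin n)) (hxs : ∀ z, fs xs + r xs ≤ fs z + r z)
    (Fk : ℕ → ℝ) (hFk : ∀ k, Fk k = fs (x k) + r (x k) - (fs xs + r xs))
    (hηle : η ≤ 1 / (L * (K + 1)))
    (k : ℕ) :
    -‖d k‖ ^ 2 ≤ -(μ / 4) * Fk (k + 1)
      + η * L * ∑ j ∈ Finset.Ico (k - K) k, ‖d j‖ ^ 2 :=
  stmt10_general f Li hLi hdiff hLip fs hfs L hL μ hμ hsc r hr η hη x τ hτ g hg hiter d hd xs Fk hFk
    hηle k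
end

section
/- Let f : ℝ^n → ℝ be convex and L-smooth and r : ℝ^n → (−∞,∞] proper closed convex, with F = f + r. Suppose x_{k+1} = x_k + ηd_k where d_k = −g_k − h_{k+1}, h_{k+1} ∈ ∂r(x_{k+1}), and g_k ∈ ℝ^n arbitrary. Then F(x_{k+1}) − F(x_k) ≤ η‖∇f(x_k) − g_k‖·‖d_k‖ + η(ηL/2 − 1)‖d_k‖². -/
/-!
The descent lemma for the `L`-Lipschitz gradient bounds `f x_{k+1}` by the linearisation at `x_k`
plus `(L/2)η²‖d‖²`; the subgradient inequality at `x_{k+1}`, tested at `x_k`, gives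
`r x_{k+1} - r x_k ≤ η⟪h, d⟫ = -η⟪g, d⟫ - η‖d‖²`. Adding the two leaves `η⟪∇f x_k - g, d⟫`,
which Cauchy–Schwarz bounds by `η‖∇f x_k - g‖‖d‖`.
-/

open scoped RealInnerProductSpace

theorem Differentiable.image_le_add_inner_gradient_add_sq {F : Type*} [NormedAddCommGroup F]
    [InnerProductSpace ℝ F] [CompleteSpace F] {f : F → ℝ} (hf : Differentiable ℝ f)
    {L : ℝ} (hLip : ∀ x y, ‖gradient f x - gradient f y‖ ≤ L * ‖x - y‖) (x y : F) :
    f y ≤ f x + ⟪gradient f x, y - x⟫ + L / 2 * ‖y - x‖ ^ 2 := by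
  set v := y - x
  let φ : ℝ → ℝ := fun t ↦ f (x + t • v) - t * ⟪gradient f x, v⟫ - L / 2 * t ^ 2 * ‖v‖ ^ 2
  have hφ : ∀ t, HasDerivAt φ
      (⟪gradient f (x + t • v) - gradient f x, v⟫ - L * t * ‖v‖ ^ 2) t := by
    intro t
    have hline : HasDerivAt (fun s : ℝ ↦ x + s • v) v t := by
      simpa using ((hasDerivAt_id t).smul_const v).const_add x
    have hfline := (hf (x + t • v)).hasGradientAt.hasFDerivAt.comp_hasDerivAt t hline
    rw [InnerProductSpace.toDual_apply_apply] at hfline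
    refine ((hfline.sub ((hasDerivAt_id t).mul_const ⟪gradient f x, v⟫)).sub
      (((hasDerivAt_pow 2 t).const_mul (L / 2)).mul_const (‖v‖ ^ 2))).congr_deriv ?_
    rw [inner_sub_left]
    ring
  have hφ_nonpos : ∀ t ∈ interior (Set.Ici (0 : ℝ)),
      ⟪gradient f (x + t • v) - gradient f x, v⟫ - L * t * ‖v‖ ^ 2 ≤ 0 := by
    intro t ht
    rw [interior_Ici, Set.mem_Ioi] at ht
    rw [sub_nonpos]
    have hgrad : ‖gradient f (x + t • v) - gradient f x‖ ≤ L * (t * ‖v‖) := by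
      simpa [norm_smul, abs_of_pos ht] using hLip (x + t • v) x
    calc ⟪gradient f (x + t • v) - gradient f x, v⟫
        ≤ ‖gradient f (x + t • v) - gradient f x‖ * ‖v‖ := real_inner_le_norm _ _
      _ ≤ L * (t * ‖v‖) * ‖v‖ := by gcongr
      _ = L * t * ‖v‖ ^ 2 := by ring
  have hanti : AntitoneOn φ (Set.Ici 0) :=
    antitoneOn_of_hasDerivWithinAt_nonpos (convex_Ici 0)
      (fun t _ ↦ (hφ t).continuousAt.continuousWithinAt)
      (fun t _ ↦ (hφ t).hasDerivWithinAt) hφ_nonpos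
  have h10 : φ 1 ≤ φ 0 := hanti (Set.mem_Ici.2 le_rfl) (Set.mem_Ici.2 zero_le_one) zero_le_one
  simp only [φ, one_smul, zero_smul, add_zero, v, add_sub_cancel] at h10
  linarith

theorem stmt19_general {n : ℕ} (f : EuclideanSpace ℝ (Fin n) → ℝ)
    (hdiff : Differentiable ℝ f)
    (L : ℝ)
    (hLip : ∀ x y, ‖gradient f x - gradient f y‖ ≤ L * ‖x - y‖)
    (r : EuclideanSpace ℝ (Fin n) → ℝ)
    (η : ℝ) (hη : 0 < η)
    (xk xk1 g h d : EuclideanSpace ℝ (Fin n))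
    (hsub : ∀ y, r xk1 + ⟪h, y - xk1⟫ ≤ r y)
    (hdk : d = -g - h) (hx : xk1 = xk + η • d) :
    f xk1 + r xk1 - (f xk + r xk)
      ≤ η * ‖gradient f xk - g‖ * ‖d‖ + η * (η * L / 2 - 1) * ‖d‖ ^ 2 := by
  have hstep : xk1 - xk = η • d := by rw [hx, add_sub_cancel_left]
  have hdescent : f xk1 ≤ f xk + η * ⟪gradient f xk, d⟫ + L / 2 * (η ^ 2 * ‖d‖ ^ 2) := by
    have := hdiff.image_le_add_inner_gradient_add_sq hLip xk xk1
    rwa [hstep, real_inner_smul_right, norm_smul, Real.norm_eq_abs, mul_pow, sq_abs] at this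
  have hprox : r xk1 ≤ r xk - η * ⟪g, d⟫ - η * ‖d‖ ^ 2 := by
    have hh : h = -g - d := by rw [hdk]; abel
    have := hsub xk
    rw [← neg_sub, hstep, hh, inner_neg_right, real_inner_smul_right, inner_sub_left,
      inner_neg_left, real_inner_self_eq_norm_sq] at this
    linarith
  have hcs : ⟪gradient f xk, d⟫ - ⟪g, d⟫ ≤ ‖gradient f xk - g‖ * ‖d‖ := by
    rw [← inner_sub_left]; exact real_inner_le_norm _ _
  linarith [mul_le_mul_of_nonneg_left hcs hη.le]

/-- Inequality (c1) in the proof of Lemma 1: with `f` convex and `L`-smooth,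
`r` convex, `h ∈ ∂r(x_{k+1})`, `d = -g - h` and `x_{k+1} = x_k + ηd`,
`F(x_{k+1}) - F(x_k) ≤ η‖∇f(x_k) - g‖‖d‖ + η(ηL/2 - 1)‖d‖²`. -/
theorem stmt19 {n : ℕ} (f : EuclideanSpace ℝ (Fin n) → ℝ)
    (hconv : ConvexOn ℝ Set.univ f) (hdiff : Differentiable ℝ f)
    (L : ℝ) (hL : 0 ≤ L)
    (hLip : ∀ x y, ‖gradient f x - gradient f y‖ ≤ L * ‖x - y‖)
    (r : EuclideanSpace ℝ (Fin n) → ℝ) (hr : ConvexOn ℝ Set.univ r)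
    (η : ℝ) (hη : 0 < η)
    (xk xk1 g h d : EuclideanSpace ℝ (Fin n))
    (hsub : ∀ y, r xk1 + ⟪h, y - xk1⟫ ≤ r y)
    (hdk : d = -g - h) (hx : xk1 = xk + η • d) :
    f xk1 + r xk1 - (f xk + r xk)
      ≤ η * ‖gradient f xk - g‖ * ‖d‖ + η * (η * L / 2 - 1) * ‖d‖ ^ 2 :=
  stmt19_general f hdiff L hLip r η hη xk xk1 g h d hsub hdk hx
end
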